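/- arXiv:2502.05974 — 3 statements merged into one kernel-verified Lean document; each statement's English description precedes it below -/
import Mathlib

section
/- Consider a Φ-restricted environment: the adversary fixes φ⋆ ∈ Φ at the start of the game and, in each round t = 1,…,T, selects (M_t, π⋆_t) ∈ φ⋆ (possibly depending on the history). The learner runs the following algorithm: ρ_1 is the uniform distribution on Φ; at round t it computes a saddle point (p_t, ν_t) of min_{p∈Δ(Π)} max_{ν∈Δ(Ψ)} AIR^Φ_{ρ_t,η}(p,ν), samples π_t ∼ p_t, observes o_t ∼ M_t(·|π_t), and sets ρ_{t+1}(φ) = ν_t(φ | π_t, o_t) for all φ ∈ Φ. Then the expected regret satisfies E[Σ_{t=1}^T (V_{M_t}(π⋆_t) − V_{M_t}(π_t))] ≤ log|Φ|/η + T · max_{ρ∈Δ(Φ)} max_{ν∈Δ(Ψ)} min_{p∈Δ(Π)} AIR^Φ_{ρ,η}(p,ν). -/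
open scoped BigOperators

noncomputable section

/-- A probability distribution on a finite type, represented as a nonnegative
function summing to one. -/
structure FDist (X : Type*) [Fintype X] where
  p : X → ℝ
  nonneg : ∀ x, 0 ≤ p x
  sum_one : ∑ x, p x = 1

/-- Kullback–Leibler divergence between two (finitely supported) distributions,
valued in `EReal`; it is `⊤` when `p` is not absolutely continuous w.r.t. `q`. -/
def KL {X : Type*} [Fintype X] (p q : X → ℝ) : EReal :=
  haveI := Classical.propDecidable (∀ x, q x = 0 → p x = 0)
  if ∀ x, q x = 0 → p x = 0 then ((∑ x, p x * Real.log (p x / q x) : ℝ) : EReal)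
  else (⊤ : EReal)

section GeneralDM

variable {Pol Obs Mod I : Type*}
variable [Fintype Pol] [Fintype Obs] [Fintype Mod] [Fintype I] [DecidableEq I]

/-- Posterior distribution over the partition cells `I` given prior `ν` on `Mod × Pol`,
after playing `π` and observing `o`. -/
def post (q : Mod → Pol → Obs → ℝ) (part : Mod × Pol → Option I)
    (ν : Mod × Pol → ℝ) (π : Pol) (o : Obs) : I → ℝ := fun i =>
  (∑ mp : Mod × Pol, if part mp = some i then ν mp * q mp.1 π o else 0) /
    (∑ mp : Mod × Pol, ν mp * q mp.1 π o)

/-- `AIR^Φ_{ρ,η}(p,ν)`. -/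
def AIR (q : Mod → Pol → Obs → ℝ) (V : Mod → Pol → ℝ) (part : Mod × Pol → Option I)
    (η : ℝ) (ρ : I → ℝ) (p : Pol → ℝ) (ν : Mod × Pol → ℝ) : EReal :=
  ((∑ π : Pol, ∑ mp : Mod × Pol, p π * ν mp * (V mp.1 mp.2 - V mp.1 π) : ℝ) : EReal)
    - ((η⁻¹ : ℝ) : EReal) *
        ∑ π : Pol, ∑ mp : Mod × Pol, ∑ o : Obs,
          ((p π * ν mp * q mp.1 π o : ℝ) : EReal) * KL (post q part ν π o) ρ

/-- `max_{ρ∈Δ(Φ)} max_{ν∈Δ(Ψ)} min_{p∈Δ(Π)} AIR^Φ_{ρ,η}(p,ν)`. -/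
def AIRmaxmin (q : Mod → Pol → Obs → ℝ) (V : Mod → Pol → ℝ)
    (part : Mod × Pol → Option I) (η : ℝ) : EReal :=
  ⨆ ρ : FDist I, ⨆ ν : {ν : FDist (Mod × Pol) // ∀ mp, part mp = none → ν.p mp = 0},
    ⨅ p : FDist Pol, AIR q V part η ρ.p p.p ν.1.p

/-- Observation distribution of the mixture model `M^μ`. -/
def mixObs (q : Mod → Pol → Obs → ℝ) (μ : Mod → ℝ) (π : Pol) : Obs → ℝ := fun o =>
  ∑ m : Mod, μ m * q m π o

/-- Observation distribution of the mixture of the model-marginal of `ν ∈ Δ(𝓜 × Π)`. -/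
def pairMixObs (q : Mod → Pol → Obs → ℝ) (ν : Mod × Pol → ℝ) (π : Pol) : Obs → ℝ := fun o =>
  ∑ mp : Mod × Pol, ν mp * q mp.1 π o

/-- The `Φ`-dependent DEC, `DEC^KL_η(𝓜, Φ)`. -/
def DECPhi (q : Mod → Pol → Obs → ℝ) (V : Mod → Pol → ℝ)
    (part : Mod × Pol → Option I) (η : ℝ) : EReal :=
  ⨆ μbar : FDist Mod, ⨅ p : FDist Pol, ⨆ i : I,
    ⨆ ν : {ν : FDist (Mod × Pol) // ∀ mp, ν.p mp ≠ 0 → part mp = some i},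
      ((∑ π : Pol, p.p π *
          ((∑ mp : Mod × Pol, ν.1.p mp * V mp.1 mp.2)
            - (∑ mp : Mod × Pol, ν.1.p mp * V mp.1 π)) : ℝ) : EReal)
        - ((η⁻¹ : ℝ) : EReal) *
            ∑ π : Pol, ((p.p π : ℝ) : EReal) * KL (pairMixObs q ν.1.p π) (mixObs q μbar.p π)

/-- `C(Φ) = max_{φ∈Φ} max_{ν∈Δ(φ)} (E_{(M,π⋆)∼ν}[V_M(π⋆)] − max_π V_{M^ν}(π))`. -/
def CPhi (V : Mod → Pol → ℝ) (part : Mod × Pol → Option I) : ℝ :=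
  ⨆ i : I, ⨆ ν : {ν : FDist (Mod × Pol) // ∀ mp, ν.p mp ≠ 0 → part mp = some i},
    ((∑ mp : Mod × Pol, ν.1.p mp * V mp.1 mp.2)
      - ⨆ π : Pol, ∑ mp : Mod × Pol, ν.1.p mp * V mp.1 π)

/-- `DEC^KL_η(𝓜̄(Φ))`: the DEC of the `Φ`-aware convexification
`𝓜̄(Φ) = ⋃_{φ∈Φ} co({M : (M,π) ∈ φ for some π})`. -/
def DECbar (q : Mod → Pol → Obs → ℝ) (V : Mod → Pol → ℝ)
    (part : Mod × Pol → Option I) (η : ℝ) : EReal :=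
  ⨆ μbar : {μ : FDist Mod // ∀ m, μ.p m ≠ 0 → ∃ i : I, ∃ π : Pol, part (m, π) = some i},
    ⨅ p : FDist Pol, ⨆ i : I,
      ⨆ μ : {μ : FDist Mod // ∀ m, μ.p m ≠ 0 → ∃ π : Pol, part (m, π) = some i},
        ((∑ π : Pol, p.p π *
            ((⨆ π' : Pol, ∑ m : Mod, μ.1.p m * V m π') - ∑ m : Mod, μ.1.p m * V m π) : ℝ) : EReal)
          - ((η⁻¹ : ℝ) : EReal) *
              ∑ π : Pol, ((p.p π : ℝ) : EReal) * KL (mixObs q μ.1.p π) (mixObs q μbar.1.p π)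

/-- `DEC^KL_η(𝓜)` for the class of pure models. -/
def DECpure (q : Mod → Pol → Obs → ℝ) (V : Mod → Pol → ℝ) (η : ℝ) : EReal :=
  ⨆ μbar : FDist Mod, ⨅ p : FDist Pol, ⨆ m : Mod,
    ((∑ π : Pol, p.p π * ((⨆ π' : Pol, V m π') - V m π) : ℝ) : EReal)
      - ((η⁻¹ : ℝ) : EReal) * ∑ π : Pol, ((p.p π : ℝ) : EReal) * KL (q m π) (mixObs q μbar.p π)

/-- `DEC^KL_η(𝓜̄(Θ))` for a total partition `Θ` of the models. -/
def DECbarTheta (q : Mod → Pol → Obs → ℝ) (V : Mod → Pol → ℝ)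
    (partM : Mod → I) (η : ℝ) : EReal :=
  ⨆ μbar : FDist Mod, ⨅ p : FDist Pol, ⨆ i : I,
    ⨆ μ : {μ : FDist Mod // ∀ m, μ.p m ≠ 0 → partM m = i},
      ((∑ π : Pol, p.p π *
          ((⨆ π' : Pol, ∑ m : Mod, μ.1.p m * V m π') - ∑ m : Mod, μ.1.p m * V m π) : ℝ) : EReal)
        - ((η⁻¹ : ℝ) : EReal) *
            ∑ π : Pol, ((p.p π : ℝ) : EReal) * KL (mixObs q μ.1.p π) (mixObs q μbar.p π)

/-- Posterior over a model partition `Θ` given prior `ν` on models. -/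
def postM (q : Mod → Pol → Obs → ℝ) (partM : Mod → I) (ν : Mod → ℝ)
    (π : Pol) (o : Obs) : I → ℝ := fun i =>
  (∑ m : Mod, if partM m = i then ν m * q m π o else 0) / (∑ m : Mod, ν m * q m π o)

/-- `InfoAIR^Θ_{ρ,η}(p, ν, π^Θ)`. -/
def InfoAIR (q : Mod → Pol → Obs → ℝ) (V : Mod → Pol → ℝ) (partM : Mod → I)
    (η : ℝ) (ρ : I → ℝ) (p : Pol → ℝ) (ν : Mod → ℝ) (πΘ : I → Pol) : EReal :=
  ((∑ π : Pol, ∑ m : Mod, p π * ν m * (V m (πΘ (partM m)) - V m π) : ℝ) : EReal)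
    - ((η⁻¹ : ℝ) : EReal) *
        ∑ π : Pol, ∑ m : Mod, ∑ o : Obs,
          ((p π * ν m * q m π o : ℝ) : EReal) * KL (postM q partM ν π o) ρ

end GeneralDM


section RegretHelpers

variable {Pol Obs Mod I : Type*}
variable [Fintype Pol] [Fintype Obs] [Fintype Mod] [Fintype I] [DecidableEq I]

private lemma coe_fsum {X : Type*} (s : Finset X) (f : X → ℝ) :
    ((∑ x ∈ s, f x : ℝ) : EReal) = ∑ x ∈ s, (f x : EReal) := by
  classical
  induction s using Finset.induction_on with
  | empty => simp
  | @insert x s hx ih => rw [Finset.sum_insert hx, Finset.sum_insert hx, EReal.coe_add, ih]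

private lemma KL_eq_coe {X : Type*} [Fintype X] {p q : X → ℝ} (h : ∀ x, q x = 0 → p x = 0) :
    KL p q = ((∑ x, p x * Real.log (p x / q x) : ℝ) : EReal) := by
  rw [KL]; exact if_pos h

private lemma KL_eq_top {X : Type*} [Fintype X] {p q : X → ℝ}
    (h : ¬ ∀ x, q x = 0 → p x = 0) : KL p q = ⊤ := by
  rw [KL]; exact if_neg h

private lemma log_ratio_ge {a b : ℝ} (ha : 0 < a) (hb : 0 < b) :
    1 - b / a ≤ Real.log (a / b) := by
  have := Real.one_sub_inv_le_log_of_pos (div_pos ha hb)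
  rwa [inv_div] at this

private lemma KL_nonneg {X : Type*} [Fintype X] {p q : X → ℝ}
    (hp : ∀ x, 0 ≤ p x) (hp1 : ∑ x, p x = 1) (hq : ∀ x, 0 ≤ q x) (hq1 : ∑ x, q x ≤ 1) :
    (0 : EReal) ≤ KL p q := by
  by_cases hac : ∀ x, q x = 0 → p x = 0
  · rw [KL_eq_coe hac]
    have key : ∀ x, p x - q x ≤ p x * Real.log (p x / q x) := by
      intro x
      rcases (hp x).eq_or_lt with h0 | h0
      · have : q x ≥ 0 := hq x
        simp [← h0]; linarith
      · have hqx : 0 < q x := by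
          rcases (hq x).eq_or_lt with h1 | h1
          · exact absurd (hac x h1.symm) (by linarith)
          · exact h1
        have := log_ratio_ge h0 hqx
        have h2 : p x * (1 - q x / p x) ≤ p x * Real.log (p x / q x) :=
          mul_le_mul_of_nonneg_left this (le_of_lt h0)
        have h3 : p x * (1 - q x / p x) = p x - q x := by
          field_simp
        linarith
    have : (0:ℝ) ≤ ∑ x, p x * Real.log (p x / q x) := by
      have := Finset.sum_le_sum (s := Finset.univ)
        (f := fun x => p x - q x) (g := fun x => p x * Real.log (p x / q x))
        (fun x _ => key x)
      rw [Finset.sum_sub_distrib, hp1] at this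
      linarith
    exact_mod_cast this
  · rw [KL_eq_top hac]; exact le_top

private lemma KL_ne_bot {X : Type*} [Fintype X] (p q : X → ℝ) : KL p q ≠ ⊥ := by
  rw [KL]; split
  · exact EReal.coe_ne_bot _
  · simp

/-- numerator of the posterior -/
private def Af (q : Mod → Pol → Obs → ℝ) (part : Mod × Pol → Option I)
    (ν : Mod × Pol → ℝ) (π : Pol) (o : Obs) (i : I) : ℝ :=
  ∑ mp : Mod × Pol, if part mp = some i then ν mp * q mp.1 π o else 0

/-- denominator of the posterior -/
private def Pf (q : Mod → Pol → Obs → ℝ) (ν : Mod × Pol → ℝ) (π : Pol) (o : Obs) : ℝ :=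
  ∑ mp : Mod × Pol, ν mp * q mp.1 π o

private lemma post_eq (q : Mod → Pol → Obs → ℝ) (part : Mod × Pol → Option I)
    (ν : Mod × Pol → ℝ) (π : Pol) (o : Obs) (i : I) :
    post q part ν π o i = Af q part ν π o i / Pf q ν π o := rfl

private lemma Af_nonneg {q : Mod → Pol → Obs → ℝ} {part : Mod × Pol → Option I}
    {ν : Mod × Pol → ℝ} (hq : ∀ m π o, 0 ≤ q m π o) (hν : ∀ mp, 0 ≤ ν mp)
    (π : Pol) (o : Obs) (i : I) : 0 ≤ Af q part ν π o i := by
  apply Finset.sum_nonneg; intro mp _; split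
  · exact mul_nonneg (hν mp) (hq _ _ _)
  · exact le_rfl

private lemma Pf_nonneg {q : Mod → Pol → Obs → ℝ}
    {ν : Mod × Pol → ℝ} (hq : ∀ m π o, 0 ≤ q m π o) (hν : ∀ mp, 0 ≤ ν mp)
    (π : Pol) (o : Obs) : 0 ≤ Pf q ν π o :=
  Finset.sum_nonneg (fun mp _ => mul_nonneg (hν mp) (hq _ _ _))

private lemma sum_Af {q : Mod → Pol → Obs → ℝ} {part : Mod × Pol → Option I}
    {ν : Mod × Pol → ℝ} (hsupp : ∀ mp, part mp = none → ν mp = 0) (π : Pol) (o : Obs) :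
    ∑ i, Af q part ν π o i = Pf q ν π o := by
  classical
  rw [show (∑ i, Af q part ν π o i)
      = ∑ mp : Mod × Pol, ∑ i, (if part mp = some i then ν mp * q mp.1 π o else 0)
      from Finset.sum_comm]
  apply Finset.sum_congr rfl
  intro mp _
  cases hpm : part mp with
  | none => simp [hpm, hsupp mp hpm]
  | some j => simp [hpm]

set_option linter.unusedSectionVars false
set_option maxHeartbeats 2000000

private lemma AIR_eq_coe_raw
    (q : Mod → Pol → Obs → ℝ) (V : Mod → Pol → ℝ) (part : Mod × Pol → Option I)
    (η : ℝ) (ρ : I → ℝ) (p : Pol → ℝ) (ν : Mod × Pol → ℝ)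
    (hp0 : ∀ π, 0 ≤ p π)
    (hfin : ∀ π o, 0 < p π → ∀ i, ρ i = 0 → post q part ν π o i = 0) :
    AIR q V part η ρ p ν =
      (((∑ π, ∑ mp : Mod × Pol, p π * ν mp * (V mp.1 mp.2 - V mp.1 π))
        - η⁻¹ * ∑ π, ∑ mp : Mod × Pol, ∑ o, p π * ν mp * q mp.1 π o *
            (∑ i, post q part ν π o i * Real.log (post q part ν π o i / ρ i)) : ℝ) : EReal) := by
  have hterm : ∀ π (mp : Mod × Pol) o,
      ((p π * ν mp * q mp.1 π o : ℝ) : EReal) * KL (post q part ν π o) ρ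
        = ((p π * ν mp * q mp.1 π o *
            (∑ i, post q part ν π o i * Real.log (post q part ν π o i / ρ i)) : ℝ) : EReal) := by
    intro π mp o
    rcases (hp0 π).eq_or_lt with h0 | h0
    · rw [← h0]
      norm_num
    · rw [KL_eq_coe (fun i hi => hfin π o h0 i hi), ← EReal.coe_mul]
  have hsum : (∑ π, ∑ mp : Mod × Pol, ∑ o,
        ((p π * ν mp * q mp.1 π o : ℝ) : EReal) * KL (post q part ν π o) ρ)
      = ((∑ π, ∑ mp : Mod × Pol, ∑ o, p π * ν mp * q mp.1 π o *
            (∑ i, post q part ν π o i * Real.log (post q part ν π o i / ρ i)) : ℝ) : EReal) := by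
    rw [coe_fsum]
    refine Finset.sum_congr rfl fun π _ => ?_
    rw [coe_fsum]
    refine Finset.sum_congr rfl fun mp _ => ?_
    rw [coe_fsum]
    refine Finset.sum_congr rfl fun o _ => ?_
    exact hterm π mp o
  rw [AIR, hsum, ← EReal.coe_mul, ← EReal.coe_sub]

private lemma J_rearrange
    (q : Mod → Pol → Obs → ℝ) (part : Mod × Pol → Option I)
    (ρ : I → ℝ) (p : Pol → ℝ) (ν : Mod × Pol → ℝ)
    (hsupp : ∀ mp, part mp = none → ν mp = 0)
    (hP : ∀ π o, 0 < Pf q ν π o) :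
    ∑ π, ∑ mp : Mod × Pol, ∑ o, p π * ν mp * q mp.1 π o *
        (∑ i, post q part ν π o i * Real.log (post q part ν π o i / ρ i))
      = ∑ π, ∑ o, p π * ∑ i, Af q part ν π o i *
          Real.log (Af q part ν π o i / (Pf q ν π o * ρ i)) := by
  refine Finset.sum_congr rfl fun π _ => ?_
  rw [Finset.sum_comm]
  refine Finset.sum_congr rfl fun o _ => ?_
  have hPne : Pf q ν π o ≠ 0 := (hP π o).ne'
  have hKL : Pf q ν π o * (∑ i, post q part ν π o i * Real.log (post q part ν π o i / ρ i))
      = ∑ i, Af q part ν π o i * Real.log (Af q part ν π o i / (Pf q ν π o * ρ i)) := by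
    rw [Finset.mul_sum]
    refine Finset.sum_congr rfl fun i _ => ?_
    rw [post_eq, div_div]
    field_simp
  calc ∑ mp : Mod × Pol, p π * ν mp * q mp.1 π o *
        (∑ i, post q part ν π o i * Real.log (post q part ν π o i / ρ i))
      = (∑ mp : Mod × Pol, ν mp * q mp.1 π o) *
        (p π * (∑ i, post q part ν π o i * Real.log (post q part ν π o i / ρ i))) := by
        rw [Finset.sum_mul]
        exact Finset.sum_congr rfl fun mp _ => by ring
    _ = p π * (Pf q ν π o * (∑ i, post q part ν π o i * Real.log (post q part ν π o i / ρ i))) := by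
        rw [Pf]; ring
    _ = p π * ∑ i, Af q part ν π o i *
          Real.log (Af q part ν π o i / (Pf q ν π o * ρ i)) := by rw [hKL]

private lemma AIR_eq_bot
    (q : Mod → Pol → Obs → ℝ) (V : Mod → Pol → ℝ) (part : Mod × Pol → Option I)
    (η : ℝ) (hη : 0 < η) (ρ : I → ℝ) (p : Pol → ℝ) (ν : Mod × Pol → ℝ)
    (hq : ∀ m π o, 0 ≤ q m π o) (hν : ∀ mp, 0 ≤ ν mp) (hp : ∀ π, 0 ≤ p π)
    (hρ0 : ∀ i, 0 ≤ ρ i) (hρ1 : ∑ i, ρ i = 1)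
    (hsupp : ∀ mp, part mp = none → ν mp = 0)
    (hP : ∀ π o, 0 < Pf q ν π o)
    (π0 : Pol) (o0 : Obs) (i0 : I) (mp0 : Mod × Pol)
    (hppos : 0 < p π0) (hρi : ρ i0 = 0) (hpart : part mp0 = some i0)
    (hw : 0 < ν mp0 * q mp0.1 π0 o0) :
    AIR q V part η ρ p ν = ⊥ := by
  have hposts : ∀ π o, ∑ i, post q part ν π o i = 1 := by
    intro π o
    rw [show ∑ i, post q part ν π o i = (∑ i, Af q part ν π o i) / Pf q ν π o from
      (Finset.sum_div _ _ _).symm]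
    rw [sum_Af hsupp, div_self (hP π o).ne']
  have hKLnn : ∀ π o, (0:EReal) ≤ KL (post q part ν π o) ρ := fun π o =>
    KL_nonneg (fun i => div_nonneg (Af_nonneg hq hν _ _ _) (le_of_lt (hP π o)))
      (hposts π o) hρ0 (le_of_eq hρ1)
  have hAf : 0 < Af q part ν π0 o0 i0 := by
    have h1 : (if part mp0 = some i0 then ν mp0 * q mp0.1 π0 o0 else 0)
        ≤ Af q part ν π0 o0 i0 := by
      apply Finset.single_le_sum (f := fun mp =>
        if part mp = some i0 then ν mp * q mp.1 π0 o0 else 0)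
        (fun mp _ => by
          by_cases h : part mp = some i0
          · simp only [h, if_pos]; exact mul_nonneg (hν mp) (hq _ _ _)
          · simp [h]) (Finset.mem_univ mp0)
    rw [if_pos hpart] at h1
    exact lt_of_lt_of_le hw h1
  have hKLtop : KL (post q part ν π0 o0) ρ = ⊤ := by
    apply KL_eq_top
    push_neg
    exact ⟨i0, hρi, by
      rw [post_eq]
      exact (div_pos hAf (hP π0 o0)).ne'⟩
  have htermnn : ∀ π (mp : Mod × Pol) o,
      (0:EReal) ≤ ((p π * ν mp * q mp.1 π o : ℝ):EReal) * KL (post q part ν π o) ρ :=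
    fun π mp o => mul_nonneg
      (by exact_mod_cast mul_nonneg (mul_nonneg (hp π) (hν mp)) (hq _ _ _)) (hKLnn π o)
  have hS : (∑ π, ∑ mp : Mod × Pol, ∑ o,
      ((p π * ν mp * q mp.1 π o : ℝ):EReal) * KL (post q part ν π o) ρ) = ⊤ := by
    rw [← top_le_iff]
    have hw' : (0:ℝ) < p π0 * (ν mp0 * q mp0.1 π0 o0) := mul_pos hppos hw
    have h1 : (⊤:EReal) ≤ ((p π0 * ν mp0 * q mp0.1 π0 o0 : ℝ):EReal)
        * KL (post q part ν π0 o0) ρ := by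
      rw [hKLtop, EReal.mul_top_of_pos (by exact_mod_cast (by rw [mul_assoc]; exact hw' : (0:ℝ) < p π0 * ν mp0 * q mp0.1 π0 o0))]
    have h2 : ((p π0 * ν mp0 * q mp0.1 π0 o0 : ℝ):EReal) * KL (post q part ν π0 o0) ρ
        ≤ ∑ o, ((p π0 * ν mp0 * q mp0.1 π0 o : ℝ):EReal) * KL (post q part ν π0 o) ρ :=
      Finset.single_le_sum (f := fun o => ((p π0 * ν mp0 * q mp0.1 π0 o : ℝ):EReal)
        * KL (post q part ν π0 o) ρ) (fun o _ => htermnn π0 mp0 o) (Finset.mem_univ o0)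
    have h3 : (∑ o, ((p π0 * ν mp0 * q mp0.1 π0 o : ℝ):EReal) * KL (post q part ν π0 o) ρ)
        ≤ ∑ mp : Mod × Pol, ∑ o,
          ((p π0 * ν mp * q mp.1 π0 o : ℝ):EReal) * KL (post q part ν π0 o) ρ :=
      Finset.single_le_sum (f := fun mp : Mod × Pol => ∑ o,
        ((p π0 * ν mp * q mp.1 π0 o : ℝ):EReal) * KL (post q part ν π0 o) ρ)
        (fun mp _ => Finset.sum_nonneg fun o _ => htermnn π0 mp o) (Finset.mem_univ mp0)
    have h4 : (∑ mp : Mod × Pol, ∑ o,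
          ((p π0 * ν mp * q mp.1 π0 o : ℝ):EReal) * KL (post q part ν π0 o) ρ)
        ≤ ∑ π, ∑ mp : Mod × Pol, ∑ o,
          ((p π * ν mp * q mp.1 π o : ℝ):EReal) * KL (post q part ν π o) ρ :=
      Finset.single_le_sum (f := fun π => ∑ mp : Mod × Pol, ∑ o,
        ((p π * ν mp * q mp.1 π o : ℝ):EReal) * KL (post q part ν π o) ρ)
        (fun π _ => Finset.sum_nonneg fun mp _ => Finset.sum_nonneg fun o _ => htermnn π mp o)
        (Finset.mem_univ π0)
    exact le_trans h1 (le_trans h2 (le_trans h3 h4))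
  rw [AIR, hS, EReal.mul_top_of_pos (by exact_mod_cast inv_pos.2 hη), EReal.sub_top]

private def diracP {X : Type*} (x0 : X) : X → ℝ := fun x =>
  haveI := Classical.propDecidable (x = x0)
  if x = x0 then 1 else 0

private lemma diracP_nonneg {X : Type*} (x0 : X) (x : X) : 0 ≤ diracP x0 x := by
  unfold diracP; split <;> norm_num

private lemma diracP_sum {X : Type*} [Fintype X] (x0 : X) : ∑ x, diracP x0 x = 1 := by
  classical
  unfold diracP
  simp

private lemma Af_lin (q : Mod → Pol → Obs → ℝ) (part : Mod × Pol → Option I)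
    (a b : ℝ) (ν1 ν2 : Mod × Pol → ℝ) (π : Pol) (o : Obs) (i : I) :
    Af q part (fun mp => a * ν1 mp + b * ν2 mp) π o i
      = a * Af q part ν1 π o i + b * Af q part ν2 π o i := by
  simp only [Af]
  rw [Finset.mul_sum, Finset.mul_sum, ← Finset.sum_add_distrib]
  refine Finset.sum_congr rfl fun mp _ => ?_
  by_cases h : part mp = some i
  · simp only [if_pos h]; ring
  · simp only [if_neg h]; ring

private lemma Pf_lin (q : Mod → Pol → Obs → ℝ)
    (a b : ℝ) (ν1 ν2 : Mod × Pol → ℝ) (π : Pol) (o : Obs) :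
    Pf q (fun mp => a * ν1 mp + b * ν2 mp) π o = a * Pf q ν1 π o + b * Pf q ν2 π o := by
  simp only [Pf]
  rw [Finset.mul_sum, Finset.mul_sum, ← Finset.sum_add_distrib]
  exact Finset.sum_congr rfl fun mp _ => by ring

private lemma le_of_forall_small {a b K : ℝ}
    (h : ∀ ε : ℝ, 0 < ε → ε ≤ 1/2 → a ≤ b + K * ε) : a ≤ b := by
  by_contra hc
  push_neg at hc
  have hKpos : (0:ℝ) < |K| + 1 := by positivity
  set ε : ℝ := min (1/2) ((a - b)/(2*(|K|+1))) with hεdef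
  have hεpos : 0 < ε := lt_min (by norm_num) (div_pos (by linarith) (by positivity))
  have h1 := h ε hεpos (min_le_left _ _)
  have h2 : K * ε ≤ |K| * ε := mul_le_mul_of_nonneg_right (le_abs_self K) hεpos.le
  have h3 : |K| * ε ≤ |K| * ((a-b)/(2*(|K|+1))) :=
    mul_le_mul_of_nonneg_left (min_le_right _ _) (abs_nonneg K)
  have h4 : |K| * ((a-b)/(2*(|K|+1))) < (a - b) := by
    rw [mul_div_assoc']
    rw [div_lt_iff₀ (by positivity)]
    nlinarith [abs_nonneg K]
  linarith

private lemma key_round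
    (q : Mod → Pol → Obs → ℝ) (V : Mod → Pol → ℝ) (part : Mod × Pol → Option I)
    (η : ℝ) (hη : 0 < η)
    (hq0 : ∀ m π o, 0 ≤ q m π o)
    (ρ : FDist I) (p : FDist Pol) (ν : FDist (Mod × Pol))
    (M : Mod) (πs : Pol) (istar : I)
    (hMi : part (M, πs) = some istar)
    (hρ : 0 < ρ.p istar)
    (hsupp : ∀ mp, part mp = none → ν.p mp = 0)
    (hP : ∀ π o, 0 < Pf q ν.p π o)
    (hsad : ∀ ν' : FDist (Mod × Pol), (∀ mp, part mp = none → ν'.p mp = 0) →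
        AIR q V part η ρ.p p.p ν'.p ≤ AIR q V part η ρ.p p.p ν.p) :
    (∀ π o, 0 < p.p π → 0 < q M π o → 0 < post q part ν.p π o istar) ∧
    ∃ F0 : ℝ, AIR q V part η ρ.p p.p ν.p = (F0 : EReal) ∧
      ∑ π, p.p π * (V M πs - V M π) ≤ F0 + η⁻¹ *
        ∑ π, ∑ o, p.p π * q M π o *
          (Real.log (post q part ν.p π o istar) - Real.log (ρ.p istar)) := by
  classical
  have hηinv : (0:ℝ) < η⁻¹ := inv_pos.2 hη
  have hsuppd : ∀ mp, part mp = none → diracP (M,πs) mp = 0 := by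
    intro mp h
    by_cases h2 : mp = (M,πs)
    · rw [h2, hMi] at h; exact absurd h (by simp)
    · simp [diracP, h2]
  have hPf_d : ∀ π o, Pf q (diracP (M,πs)) π o = q M π o := by
    intro π o; simp [Pf, diracP, ite_mul]
  have hAf_d : ∀ π o i, Af q part (diracP (M,πs)) π o i = if i = istar then q M π o else 0 := by
    intro π o i
    rw [Af, Finset.sum_eq_single (M,πs)]
    · simp only [diracP, if_pos rfl, hMi, one_mul]
      by_cases h : i = istar
      · subst h; simp
      · rw [if_neg (fun hh => h (Option.some_injective _ hh).symm), if_neg h]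
    · intro mp _ hne
      simp [diracP, hne]
    · intro h; exact absurd (Finset.mem_univ _) h
  have hfin_d : ∀ π o, 0 < p.p π → ∀ i, ρ.p i = 0 → post q part (diracP (M,πs)) π o i = 0 := by
    intro π o _ i hρi
    have hne : i ≠ istar := fun h => by rw [← h, hρi] at hρ; exact lt_irrefl _ hρ
    rw [post_eq, hAf_d, if_neg hne, zero_div]
  have hRp : ∀ π o i, 0 < p.p π → 0 < Af q part ν.p π o i → 0 < ρ.p i := by
    intro π o i hpπ hA
    rcases (ρ.nonneg i).eq_or_lt with h0 | h0
    · exfalso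
      have hex : ∃ mp0 : Mod × Pol,
          0 < (if part mp0 = some i then ν.p mp0 * q mp0.1 π o else 0) := by
        by_contra hall
        push_neg at hall
        have hle : Af q part ν.p π o i ≤ 0 := Finset.sum_nonpos fun mp _ => hall mp
        linarith
      obtain ⟨mp0, hmp0⟩ := hex
      have hpart0 : part mp0 = some i := by
        by_cases h : part mp0 = some i
        · exact h
        · rw [if_neg h] at hmp0; exact absurd hmp0 (lt_irrefl 0)
      rw [if_pos hpart0] at hmp0
      have hbot := AIR_eq_bot q V part η hη ρ.p p.p ν.p hq0 ν.nonneg p.nonneg ρ.nonneg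
        ρ.sum_one hsupp hP π o i mp0 hpπ h0.symm hpart0 hmp0
      have h1 := hsad ⟨diracP (M,πs), diracP_nonneg _, diracP_sum _⟩ hsuppd
      rw [hbot] at h1
      rw [AIR_eq_coe_raw q V part η ρ.p p.p (diracP (M,πs)) p.nonneg hfin_d] at h1
      exact EReal.coe_ne_bot _ (le_bot_iff.mp h1)
    · exact h0
  have hAC : ∀ π o i, 0 < p.p π → ρ.p i = 0 → Af q part ν.p π o i = 0 := by
    intro π o i hpπ hρi
    rcases (Af_nonneg hq0 ν.nonneg π o i (part := part)).eq_or_lt with h | h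
    · exact h.symm
    · exact absurd hρi (ne_of_gt (hRp π o i hpπ h))
  have hfin_ν : ∀ π o, 0 < p.p π → ∀ i, ρ.p i = 0 → post q part ν.p π o i = 0 := by
    intro π o hpπ i hρi
    rw [post_eq, hAC π o i hpπ hρi, zero_div]
  have hAIRν : AIR q V part η ρ.p p.p ν.p =
      (((∑ π, ∑ mp : Mod × Pol, p.p π * ν.p mp * (V mp.1 mp.2 - V mp.1 π))
        - η⁻¹ * ∑ π, ∑ o, p.p π * ∑ i, Af q part ν.p π o i *
            Real.log (Af q part ν.p π o i / (Pf q ν.p π o * ρ.p i)) : ℝ) : EReal) := by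
    rw [AIR_eq_coe_raw q V part η ρ.p p.p ν.p p.nonneg hfin_ν,
      J_rearrange q part ρ.p p.p ν.p hsupp hP]
  set R0 := ∑ π, ∑ mp : Mod × Pol, p.p π * ν.p mp * (V mp.1 mp.2 - V mp.1 π) with hR0def
  set J0 := ∑ π, ∑ o, p.p π * ∑ i, Af q part ν.p π o i *
      Real.log (Af q part ν.p π o i / (Pf q ν.p π o * ρ.p i)) with hJ0def
  set Rstar := ∑ π, p.p π * (V M πs - V M π) with hRstardef
  have hdag : ∀ ε : ℝ, 0 < ε → ε ≤ 1/2 →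
      Rstar - R0 ≤ η⁻¹ * ((∑ π, ∑ o, p.p π * q M π o *
        Real.log (((1-ε) * Af q part ν.p π o istar + ε * q M π o) /
          (((1-ε) * Pf q ν.p π o + ε * q M π o) * ρ.p istar))) - J0) := by
    intro ε hε hε2
    have h1ε : (0:ℝ) < 1 - ε := by linarith
    set νε : FDist (Mod × Pol) := ⟨fun mp => (1-ε) * ν.p mp + ε * diracP (M,πs) mp,
      fun mp => add_nonneg (mul_nonneg h1ε.le (ν.nonneg mp))
        (mul_nonneg hε.le (diracP_nonneg _ mp)),
      by rw [Finset.sum_add_distrib, ← Finset.mul_sum, ← Finset.mul_sum, ν.sum_one,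
        diracP_sum]; ring⟩ with hνεdef
    have hνεp : νε.p = fun mp => (1-ε) * ν.p mp + ε * diracP (M,πs) mp := rfl
    have hAfε : ∀ π o i, Af q part νε.p π o i
        = (1-ε) * Af q part ν.p π o i + ε * (if i = istar then q M π o else 0) := by
      intro π o i; rw [hνεp, Af_lin, hAf_d]
    have hPfε : ∀ π o, Pf q νε.p π o = (1-ε) * Pf q ν.p π o + ε * q M π o := by
      intro π o; rw [hνεp, Pf_lin, hPf_d]
    have hPfεpos : ∀ π o, 0 < Pf q νε.p π o := by
      intro π o; rw [hPfε]
      have h1 := hP π o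
      have h2 := hq0 M π o
      nlinarith
    have hsuppε : ∀ mp, part mp = none → νε.p mp = 0 := by
      intro mp h; rw [hνεp]; simp [hsupp mp h, hsuppd mp h]
    have hfin_νε : ∀ π o, 0 < p.p π → ∀ i, ρ.p i = 0 → post q part νε.p π o i = 0 := by
      intro π o hpπ i hρi
      have hne : i ≠ istar := fun h => by rw [← h, hρi] at hρ; exact lt_irrefl _ hρ
      rw [post_eq, hAfε, hAC π o i hpπ hρi, if_neg hne]
      norm_num
    have hAIRνε := AIR_eq_coe_raw q V part η ρ.p p.p νε.p p.nonneg hfin_νε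
    rw [J_rearrange q part ρ.p p.p νε.p hsuppε hPfεpos] at hAIRνε
    have hsadε := hsad νε hsuppε
    rw [hAIRνε, hAIRν, EReal.coe_le_coe_iff] at hsadε
    -- decompose the first sum
    have hRell : (∑ π, ∑ mp : Mod × Pol, p.p π * νε.p mp * (V mp.1 mp.2 - V mp.1 π))
        = (1-ε) * R0 + ε * Rstar := by
      rw [hR0def, hRstardef, Finset.mul_sum, Finset.mul_sum, ← Finset.sum_add_distrib]
      refine Finset.sum_congr rfl fun π _ => ?_
      have hd : ∑ mp : Mod × Pol, p.p π * diracP (M,πs) mp * (V mp.1 mp.2 - V mp.1 π)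
          = p.p π * (V M πs - V M π) := by
        rw [Finset.sum_eq_single (M,πs)]
        · simp [diracP]
        · intro mp _ hne; simp [diracP, hne]
        · intro h; exact absurd (Finset.mem_univ _) h
      rw [← hd, hνεp, Finset.mul_sum, Finset.mul_sum, ← Finset.sum_add_distrib]
      exact Finset.sum_congr rfl fun mp _ => by ring
    -- decompose the KL sum
    set Gib := ∑ π, ∑ o, p.p π * ∑ i, Af q part ν.p π o i *
        Real.log (Af q part νε.p π o i / (Pf q νε.p π o * ρ.p i)) with hGibdef
    set Gε := ∑ π, ∑ o, p.p π * q M π o *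
        Real.log (Af q part νε.p π o istar / (Pf q νε.p π o * ρ.p istar)) with hGεdef
    have hJsplit : (∑ π, ∑ o, p.p π * ∑ i, Af q part νε.p π o i *
          Real.log (Af q part νε.p π o i / (Pf q νε.p π o * ρ.p i)))
        = (1-ε) * Gib + ε * Gε := by
      rw [hGibdef, hGεdef, Finset.mul_sum, Finset.mul_sum, ← Finset.sum_add_distrib]
      refine Finset.sum_congr rfl fun π _ => ?_
      rw [Finset.mul_sum, Finset.mul_sum, ← Finset.sum_add_distrib]
      refine Finset.sum_congr rfl fun o _ => ?_
      have hinner : (∑ i, Af q part νε.p π o i *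
            Real.log (Af q part νε.p π o i / (Pf q νε.p π o * ρ.p i)))
          = (1-ε) * (∑ i, Af q part ν.p π o i *
              Real.log (Af q part νε.p π o i / (Pf q νε.p π o * ρ.p i)))
            + ε * (q M π o *
              Real.log (Af q part νε.p π o istar / (Pf q νε.p π o * ρ.p istar))) := by
        rw [Finset.mul_sum]
        rw [show ε * (q M π o * Real.log (Af q part νε.p π o istar /
              (Pf q νε.p π o * ρ.p istar)))
            = ∑ i, (if i = istar then ε * (q M π o * Real.log (Af q part νε.p π o i /
              (Pf q νε.p π o * ρ.p i))) else 0) from by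
            rw [Finset.sum_ite_eq' Finset.univ istar]; simp]
        rw [← Finset.sum_add_distrib]
        refine Finset.sum_congr rfl fun i _ => ?_
        rw [hAfε]
        by_cases h : i = istar
        · rw [if_pos h, if_pos h, h]; ring
        · rw [if_neg h, if_neg h]; ring
      rw [hinner]; ring
    rw [hRell, hJsplit] at hsadε
    -- Gibbs inequality : Gib ≤ J0
    have hGibbs : Gib ≤ J0 := by
      rw [hGibdef, hJ0def]
      refine Finset.sum_le_sum fun π _ => Finset.sum_le_sum fun o _ => ?_
      rcases (p.nonneg π).eq_or_lt with hpπ | hpπ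
      · rw [← hpπ, zero_mul, zero_mul]
      · refine mul_le_mul_of_nonneg_left ?_ hpπ.le
        have key_i : ∀ i : I,
            Af q part ν.p π o i - (Pf q ν.p π o / Pf q νε.p π o) * Af q part νε.p π o i
              ≤ Af q part ν.p π o i * (Real.log (Af q part ν.p π o i / (Pf q ν.p π o * ρ.p i))
                - Real.log (Af q part νε.p π o i / (Pf q νε.p π o * ρ.p i))) := by
          intro i
          rcases (Af_nonneg hq0 ν.nonneg π o i (part := part)).eq_or_lt with hA | hA
          · rw [← hA, zero_mul, zero_sub]
            exact neg_nonpos.mpr (mul_nonneg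
              (div_nonneg (Pf_nonneg hq0 ν.nonneg π o) (hPfεpos π o).le)
              (Af_nonneg hq0 νε.nonneg π o i))
          · have hρi := hRp π o i hpπ hA
            have hAfε' : 0 < Af q part νε.p π o i := by
              rw [hAfε]
              have h2 : (0:ℝ) ≤ (if i = istar then q M π o else 0) := by
                by_cases h : i = istar
                · rw [if_pos h]; exact hq0 M π o
                · rw [if_neg h]
              nlinarith
            have hPfν := hP π o
            have hPfε' := hPfεpos π o
            have hne1 : ρ.p i ≠ 0 := hρi.ne'
            have hne2 : Pf q ν.p π o ≠ 0 := hPfν.ne'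
            have hne3 : Pf q νε.p π o ≠ 0 := hPfε'.ne'
            have hne4 : Af q part ν.p π o i ≠ 0 := hA.ne'
            have hne5 : Af q part νε.p π o i ≠ 0 := hAfε'.ne'
            have hlogeq : Real.log (Af q part ν.p π o i / (Pf q ν.p π o * ρ.p i))
                - Real.log (Af q part νε.p π o i / (Pf q νε.p π o * ρ.p i))
                = Real.log ((Af q part ν.p π o i * Pf q νε.p π o)
                    / (Pf q ν.p π o * Af q part νε.p π o i)) := by
              rw [← Real.log_div (div_pos hA (mul_pos hPfν hρi)).ne'
                (div_pos hAfε' (mul_pos hPfε' hρi)).ne']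
              congr 1
              field_simp
            have hlogge := log_ratio_ge (a := Af q part ν.p π o i * Pf q νε.p π o)
              (b := Pf q ν.p π o * Af q part νε.p π o i)
              (mul_pos hA hPfε') (mul_pos hPfν hAfε')
            rw [hlogeq]
            have h6 := mul_le_mul_of_nonneg_left hlogge hA.le
            have h7 : Af q part ν.p π o i * (1 - Pf q ν.p π o * Af q part νε.p π o i
                / (Af q part ν.p π o i * Pf q νε.p π o))
                = Af q part ν.p π o i
                  - Pf q ν.p π o / Pf q νε.p π o * Af q part νε.p π o i := by
              field_simp
            rw [h7] at h6
            exact h6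
        have hsumkey := Finset.sum_le_sum (s := Finset.univ) (fun i _ => key_i i)
        have hL : (∑ i, (Af q part ν.p π o i
            - Pf q ν.p π o / Pf q νε.p π o * Af q part νε.p π o i)) = 0 := by
          rw [Finset.sum_sub_distrib, sum_Af hsupp, ← Finset.mul_sum, sum_Af hsuppε,
            div_mul_cancel₀ _ (hPfεpos π o).ne', sub_self]
        have hR : (∑ i, Af q part ν.p π o i *
              (Real.log (Af q part ν.p π o i / (Pf q ν.p π o * ρ.p i))
                - Real.log (Af q part νε.p π o i / (Pf q νε.p π o * ρ.p i))))
            = (∑ i, Af q part ν.p π o i *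
                Real.log (Af q part ν.p π o i / (Pf q ν.p π o * ρ.p i)))
              - (∑ i, Af q part ν.p π o i *
                Real.log (Af q part νε.p π o i / (Pf q νε.p π o * ρ.p i))) := by
          rw [← Finset.sum_sub_distrib]
          exact Finset.sum_congr rfl fun i _ => by ring
        rw [hL, hR] at hsumkey
        linarith
    -- conclude hdag
    have hGconv : (∑ π, ∑ o, p.p π * q M π o *
        Real.log (((1-ε) * Af q part ν.p π o istar + ε * q M π o) /
          (((1-ε) * Pf q ν.p π o + ε * q M π o) * ρ.p istar))) = Gε := by
      rw [hGεdef]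
      refine Finset.sum_congr rfl fun π _ => Finset.sum_congr rfl fun o _ => ?_
      rw [hAfε, hPfε, if_pos rfl]
    rw [hGconv]
    have hmul := mul_le_mul_of_nonneg_left hGibbs (mul_nonneg hηinv.le h1ε.le)
    have e3 : ε * (Rstar - R0) ≤ ε * (η⁻¹ * (Gε - J0)) := by nlinarith [hsadε, hmul]
    exact (mul_le_mul_iff_right₀ hε).mp e3
  have hρne : ρ.p istar ≠ 0 := hρ.ne'
  have hAfpos : ∀ π o, 0 < p.p π → 0 < q M π o → 0 < Af q part ν.p π o istar := by
    intro π0 o0 hp0 hq00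
    rcases (Af_nonneg hq0 ν.nonneg π0 o0 istar (part := part)).eq_or_lt with hA0 | hA0
    · exfalso
      set c0 := p.p π0 * q M π0 o0 with hc0def
      have hc0 : 0 < c0 := mul_pos hp0 hq00
      set C1 := ∑ π, ∑ o, p.p π * q M π o *
        Real.log ((Af q part ν.p π o istar + q M π o)
          / ((Pf q ν.p π o / 2) * ρ.p istar)) with hC1def
      have hGbound : ∀ ε : ℝ, 0 < ε → ε ≤ 1/2 →
          (∑ π, ∑ o, p.p π * q M π o *
            Real.log (((1-ε) * Af q part ν.p π o istar + ε * q M π o) /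
              (((1-ε) * Pf q ν.p π o + ε * q M π o) * ρ.p istar)))
          ≤ C1 + c0 * Real.log ε := by
        intro ε hε hε2
        have h1ε : (0:ℝ) < 1 - ε := by linarith
        have hterm : ∀ π o, p.p π * q M π o *
            Real.log (((1-ε) * Af q part ν.p π o istar + ε * q M π o) /
              (((1-ε) * Pf q ν.p π o + ε * q M π o) * ρ.p istar))
            ≤ p.p π * q M π o *
              Real.log ((Af q part ν.p π o istar + q M π o)
                / ((Pf q ν.p π o / 2) * ρ.p istar))
              + (if π = π0 then (if o = o0 then c0 * Real.log ε else 0) else 0) := by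
          intro π o
          rcases (mul_nonneg (p.nonneg π) (hq0 M π o)).eq_or_lt with hpq | hpq
          · have hnb : ¬ (π = π0 ∧ o = o0) := by
              intro h
              rw [h.1, h.2, ← hc0def] at hpq
              exact hc0.ne hpq
            rw [← hpq, zero_mul, zero_mul]
            by_cases h1 : π = π0
            · by_cases h2 : o = o0
              · exact absurd ⟨h1, h2⟩ hnb
              · rw [if_pos h1, if_neg h2, add_zero]
            · rw [if_neg h1, add_zero]
          · have hppos : 0 < p.p π := by
              rcases mul_pos_iff.mp hpq with ⟨h1, _⟩ | ⟨h1, _⟩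
              · exact h1
              · exact absurd h1 (not_lt.mpr (p.nonneg π))
            have hqpos : 0 < q M π o := by
              rcases mul_pos_iff.mp hpq with ⟨_, h1⟩ | ⟨_, h1⟩
              · exact h1
              · exact absurd h1 (not_lt.mpr (hq0 M π o))
            have hAfnn := Af_nonneg hq0 ν.nonneg π o istar (part := part)
            have hPfν := hP π o
            have hNεpos : 0 < (1-ε) * Af q part ν.p π o istar + ε * q M π o := by nlinarith
            have hDεpos : 0 < (1-ε) * Pf q ν.p π o + ε * q M π o := by nlinarith
            have hDminpos : 0 < (Pf q ν.p π o / 2) * ρ.p istar :=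
              mul_pos (by linarith) hρ
            have hDbig : (Pf q ν.p π o / 2) * ρ.p istar
                ≤ ((1-ε) * Pf q ν.p π o + ε * q M π o) * ρ.p istar := by
              apply mul_le_mul_of_nonneg_right _ (ρ.nonneg istar)
              nlinarith
            have hNsmall : (1-ε) * Af q part ν.p π o istar + ε * q M π o
                ≤ Af q part ν.p π o istar + q M π o := by nlinarith
            have hlog1 : Real.log (((1-ε) * Af q part ν.p π o istar + ε * q M π o) /
                (((1-ε) * Pf q ν.p π o + ε * q M π o) * ρ.p istar))
                ≤ Real.log ((Af q part ν.p π o istar + q M π o)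
                  / ((Pf q ν.p π o / 2) * ρ.p istar)) := by
              apply Real.log_le_log (div_pos hNεpos (mul_pos hDεpos hρ))
              exact div_le_div₀ (by nlinarith) hNsmall hDminpos hDbig
            by_cases h1 : π = π0
            · by_cases h2 : o = o0
              · rw [if_pos h1, if_pos h2]
                rw [h1, h2]
                rw [← hA0, ← hc0def]
                have heq : (1-ε) * (0:ℝ) + ε * q M π0 o0 = ε * q M π0 o0 := by ring
                rw [heq]
                have hq0pos : 0 < q M π0 o0 := by rw [← h1, ← h2]; exact hqpos
                have hDεpos' : 0 < (1-ε) * Pf q ν.p π0 o0 + ε * q M π0 o0 := by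
                  rw [← h1, ← h2]; exact hDεpos
                have hPfν' : 0 < Pf q ν.p π0 o0 := hP π0 o0
                have hsplit : Real.log (ε * q M π0 o0 /
                    (((1-ε) * Pf q ν.p π0 o0 + ε * q M π0 o0) * ρ.p istar))
                    = Real.log ε + Real.log (q M π0 o0 /
                      (((1-ε) * Pf q ν.p π0 o0 + ε * q M π0 o0) * ρ.p istar)) := by
                  rw [mul_div_assoc, Real.log_mul hε.ne'
                    (div_pos hq0pos (mul_pos hDεpos' hρ)).ne']
                have hlog2 : Real.log (q M π0 o0 /
                    (((1-ε) * Pf q ν.p π0 o0 + ε * q M π0 o0) * ρ.p istar))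
                    ≤ Real.log ((0 + q M π0 o0) / ((Pf q ν.p π0 o0 / 2) * ρ.p istar)) := by
                  apply Real.log_le_log (div_pos hq0pos (mul_pos hDεpos' hρ))
                  apply div_le_div₀ (by nlinarith) (by linarith)
                    (mul_pos (by linarith) hρ)
                  · apply mul_le_mul_of_nonneg_right _ (ρ.nonneg istar)
                    nlinarith
                rw [hsplit]
                have h5 := mul_le_mul_of_nonneg_left hlog2
                  (le_of_lt (by rw [← h1, ← h2]; exact hpq : (0:ℝ) < p.p π0 * q M π0 o0))
                rw [← hc0def] at h5
                nlinarith
              · rw [if_pos h1, if_neg h2, add_zero]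
                exact mul_le_mul_of_nonneg_left hlog1 hpq.le
            · rw [if_neg h1, add_zero]
              exact mul_le_mul_of_nonneg_left hlog1 hpq.le
        calc (∑ π, ∑ o, p.p π * q M π o *
            Real.log (((1-ε) * Af q part ν.p π o istar + ε * q M π o) /
              (((1-ε) * Pf q ν.p π o + ε * q M π o) * ρ.p istar)))
            ≤ ∑ π, ∑ o, (p.p π * q M π o *
              Real.log ((Af q part ν.p π o istar + q M π o)
                / ((Pf q ν.p π o / 2) * ρ.p istar))
              + (if π = π0 then (if o = o0 then c0 * Real.log ε else 0) else 0)) :=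
            Finset.sum_le_sum fun π _ => Finset.sum_le_sum fun o _ => hterm π o
          _ = C1 + c0 * Real.log ε := by
            rw [hC1def]
            rw [show (∑ π, ∑ o, (p.p π * q M π o *
              Real.log ((Af q part ν.p π o istar + q M π o)
                / ((Pf q ν.p π o / 2) * ρ.p istar))
              + (if π = π0 then (if o = o0 then c0 * Real.log ε else 0) else 0)))
              = (∑ π, ∑ o, p.p π * q M π o *
                Real.log ((Af q part ν.p π o istar + q M π o)
                  / ((Pf q ν.p π o / 2) * ρ.p istar)))
                + ∑ π, ∑ o, (if π = π0 then (if o = o0 then c0 * Real.log ε else 0) else 0)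
              from by
                rw [← Finset.sum_add_distrib]
                exact Finset.sum_congr rfl fun π _ => Finset.sum_add_distrib]
            congr 1
            rw [Finset.sum_eq_single π0]
            · rw [Finset.sum_eq_single o0]
              · rw [if_pos rfl, if_pos rfl]
              · intro o _ ho; rw [if_pos rfl, if_neg ho]
              · intro h; exact absurd (Finset.mem_univ _) h
            · intro π _ hπ; exact Finset.sum_eq_zero fun o _ => if_neg hπ
            · intro h; exact absurd (Finset.mem_univ _) h
      set X := (η * (Rstar - R0) + J0 - C1 - 1) / c0 with hXdef
      set ε0 := min (1/2) (Real.exp X) with hε0def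
      have hε0pos : 0 < ε0 := lt_min (by norm_num) (Real.exp_pos X)
      have hε0le : ε0 ≤ 1/2 := min_le_left _ _
      have hlogε0 : Real.log ε0 ≤ X :=
        le_trans (Real.log_le_log hε0pos (min_le_right _ _)) (le_of_eq (Real.log_exp X))
      have hd := hdag ε0 hε0pos hε0le
      have hG := hGbound ε0 hε0pos hε0le
      have h8 : Rstar - R0 ≤ η⁻¹ * (C1 + c0 * Real.log ε0 - J0) :=
        le_trans hd (mul_le_mul_of_nonneg_left (by linarith) hηinv.le)
      have h9 : c0 * Real.log ε0 ≤ η * (Rstar - R0) + J0 - C1 - 1 := by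
        have h := mul_le_mul_of_nonneg_left hlogε0 hc0.le
        have hc0ne : c0 ≠ 0 := hc0.ne'
        have h2 : c0 * X = η * (Rstar - R0) + J0 - C1 - 1 := by
          rw [hXdef]; field_simp
        linarith
      have h10 : η⁻¹ * (C1 + c0 * Real.log ε0 - J0) ≤ η⁻¹ * (η * (Rstar - R0) - 1) :=
        mul_le_mul_of_nonneg_left (by linarith) hηinv.le
      have h11 : η⁻¹ * (η * (Rstar - R0) - 1) = (Rstar - R0) - η⁻¹ := by
        rw [mul_sub, ← mul_assoc, inv_mul_cancel₀ hη.ne', one_mul, mul_one]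
      linarith
    · exact hA0
  have hpos1 : ∀ π o, 0 < p.p π → 0 < q M π o → 0 < post q part ν.p π o istar := by
    intro π o h1 h2
    rw [post_eq]
    exact div_pos (hAfpos π o h1 h2) (hP π o)
  refine ⟨hpos1, R0 - η⁻¹ * J0, hAIRν, ?_⟩
  set G := ∑ π, ∑ o, p.p π * q M π o *
      Real.log (Af q part ν.p π o istar / (Pf q ν.p π o * ρ.p istar)) with hGdef
  set C := ∑ π, ∑ o, p.p π * q M π o * (q M π o / Af q part ν.p π o istar + 2) with hCdef
  have hGb : ∀ ε : ℝ, 0 < ε → ε ≤ 1/2 →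
      (∑ π, ∑ o, p.p π * q M π o *
        Real.log (((1-ε) * Af q part ν.p π o istar + ε * q M π o) /
          (((1-ε) * Pf q ν.p π o + ε * q M π o) * ρ.p istar)))
      ≤ G + C * ε := by
    intro ε hε hε2
    have h1ε : (0:ℝ) < 1 - ε := by linarith
    have hterm : ∀ π o, p.p π * q M π o *
        Real.log (((1-ε) * Af q part ν.p π o istar + ε * q M π o) /
          (((1-ε) * Pf q ν.p π o + ε * q M π o) * ρ.p istar))
        ≤ p.p π * q M π o *
            Real.log (Af q part ν.p π o istar / (Pf q ν.p π o * ρ.p istar))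
          + ε * (p.p π * q M π o * (q M π o / Af q part ν.p π o istar + 2)) := by
      intro π o
      rcases (mul_nonneg (p.nonneg π) (hq0 M π o)).eq_or_lt with hpq | hpq
      · rw [← hpq, zero_mul, zero_mul, zero_mul, mul_zero, add_zero]
      · have hppos : 0 < p.p π := by
          rcases mul_pos_iff.mp hpq with ⟨h1, _⟩ | ⟨h1, _⟩
          · exact h1
          · exact absurd h1 (not_lt.mpr (p.nonneg π))
        have hqpos : 0 < q M π o := by
          rcases mul_pos_iff.mp hpq with ⟨_, h1⟩ | ⟨_, h1⟩
          · exact h1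
          · exact absurd h1 (not_lt.mpr (hq0 M π o))
        have hAf := hAfpos π o hppos hqpos
        have hPfν := hP π o
        have hNεpos : 0 < (1-ε) * Af q part ν.p π o istar + ε * q M π o := by nlinarith
        have hDεpos : 0 < (1-ε) * Pf q ν.p π o + ε * q M π o := by nlinarith
        have hNssum : 0 < Af q part ν.p π o istar + ε * q M π o := by nlinarith
        have hlogN : Real.log ((1-ε) * Af q part ν.p π o istar + ε * q M π o)
            ≤ Real.log (Af q part ν.p π o istar) + ε * q M π o / Af q part ν.p π o istar := by
          have s1 : Real.log ((1-ε) * Af q part ν.p π o istar + ε * q M π o)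
              ≤ Real.log (Af q part ν.p π o istar + ε * q M π o) :=
            Real.log_le_log hNεpos (by nlinarith)
          have s2 := Real.log_div hNssum.ne' hAf.ne'
          have s3 : Real.log ((Af q part ν.p π o istar + ε * q M π o)
                / Af q part ν.p π o istar)
              ≤ (Af q part ν.p π o istar + ε * q M π o) / Af q part ν.p π o istar - 1 :=
            Real.log_le_sub_one_of_pos (div_pos hNssum hAf)
          have s4 : (Af q part ν.p π o istar + ε * q M π o) / Af q part ν.p π o istar - 1
              = ε * q M π o / Af q part ν.p π o istar := by
            field_simp
            ring
          linarith
        have hlogD : Real.log (Pf q ν.p π o) - 2*ε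
            ≤ Real.log ((1-ε) * Pf q ν.p π o + ε * q M π o) := by
          have t1 : Real.log ((1-ε) * Pf q ν.p π o)
              ≤ Real.log ((1-ε) * Pf q ν.p π o + ε * q M π o) :=
            Real.log_le_log (mul_pos h1ε hPfν) (by nlinarith)
          have t2 : Real.log ((1-ε) * Pf q ν.p π o)
              = Real.log (1-ε) + Real.log (Pf q ν.p π o) :=
            Real.log_mul h1ε.ne' hPfν.ne'
          have t3 : 1 - (1-ε)⁻¹ ≤ Real.log (1-ε) := Real.one_sub_inv_le_log_of_pos h1ε
          have t4 : (1-ε)⁻¹ ≤ 1 + 2*ε := by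
            rw [inv_eq_one_div, div_le_iff₀ h1ε]; nlinarith
          linarith
        have e1 : Real.log (((1-ε) * Af q part ν.p π o istar + ε * q M π o) /
              (((1-ε) * Pf q ν.p π o + ε * q M π o) * ρ.p istar))
            = Real.log ((1-ε) * Af q part ν.p π o istar + ε * q M π o)
              - Real.log ((1-ε) * Pf q ν.p π o + ε * q M π o) - Real.log (ρ.p istar) := by
          rw [Real.log_div hNεpos.ne' (mul_pos hDεpos hρ).ne',
            Real.log_mul hDεpos.ne' hρne]
          ring
        have e2 : Real.log (Af q part ν.p π o istar / (Pf q ν.p π o * ρ.p istar))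
            = Real.log (Af q part ν.p π o istar) - Real.log (Pf q ν.p π o)
              - Real.log (ρ.p istar) := by
          rw [Real.log_div hAf.ne' (mul_pos hPfν hρ).ne', Real.log_mul hPfν.ne' hρne]
          ring
        have hcomb : Real.log (((1-ε) * Af q part ν.p π o istar + ε * q M π o) /
              (((1-ε) * Pf q ν.p π o + ε * q M π o) * ρ.p istar))
            ≤ Real.log (Af q part ν.p π o istar / (Pf q ν.p π o * ρ.p istar))
              + ε * (q M π o / Af q part ν.p π o istar + 2) := by
          rw [e1, e2]
          have hh : ε * q M π o / Af q part ν.p π o istar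
              = ε * (q M π o / Af q part ν.p π o istar) := by ring
          rw [hh] at hlogN
          have expand : ε * (q M π o / Af q part ν.p π o istar + 2)
              = ε * (q M π o / Af q part ν.p π o istar) + 2*ε := by ring
          linarith
        nlinarith [mul_le_mul_of_nonneg_left hcomb hpq.le]
    have hsplit2 : (∑ π, ∑ o, (p.p π * q M π o *
          Real.log (Af q part ν.p π o istar / (Pf q ν.p π o * ρ.p istar))
        + ε * (p.p π * q M π o * (q M π o / Af q part ν.p π o istar + 2))))
        = G + ε * C := by
      rw [hGdef, hCdef]
      rw [show (ε * ∑ π, ∑ o, p.p π * q M π o * (q M π o / Af q part ν.p π o istar + 2))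
          = ∑ π, ∑ o, ε * (p.p π * q M π o * (q M π o / Af q part ν.p π o istar + 2)) from by
        rw [Finset.mul_sum]
        exact Finset.sum_congr rfl fun π _ => Finset.mul_sum _ _ _]
      rw [← Finset.sum_add_distrib]
      exact Finset.sum_congr rfl fun π _ => Finset.sum_add_distrib
    calc (∑ π, ∑ o, p.p π * q M π o *
        Real.log (((1-ε) * Af q part ν.p π o istar + ε * q M π o) /
          (((1-ε) * Pf q ν.p π o + ε * q M π o) * ρ.p istar)))
        ≤ ∑ π, ∑ o, (p.p π * q M π o *
            Real.log (Af q part ν.p π o istar / (Pf q ν.p π o * ρ.p istar))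
          + ε * (p.p π * q M π o * (q M π o / Af q part ν.p π o istar + 2))) :=
        Finset.sum_le_sum fun π _ => Finset.sum_le_sum fun o _ => hterm π o
      _ = G + ε * C := hsplit2
      _ = G + C * ε := by ring
  have h12 : Rstar - R0 ≤ η⁻¹ * (G - J0) := by
    apply le_of_forall_small (K := η⁻¹ * C)
    intro ε hε hε2
    refine le_trans (hdag ε hε hε2) ?_
    calc η⁻¹ * ((∑ π, ∑ o, p.p π * q M π o *
        Real.log (((1-ε) * Af q part ν.p π o istar + ε * q M π o) /
          (((1-ε) * Pf q ν.p π o + ε * q M π o) * ρ.p istar))) - J0)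
        ≤ η⁻¹ * ((G + C * ε) - J0) :=
        mul_le_mul_of_nonneg_left (by linarith [hGb ε hε hε2]) hηinv.le
      _ = η⁻¹ * (G - J0) + η⁻¹ * C * ε := by ring
  have hGpost : G = ∑ π, ∑ o, p.p π * q M π o *
      (Real.log (post q part ν.p π o istar) - Real.log (ρ.p istar)) := by
    rw [hGdef]
    refine Finset.sum_congr rfl fun π _ => Finset.sum_congr rfl fun o _ => ?_
    rcases (mul_nonneg (p.nonneg π) (hq0 M π o)).eq_or_lt with hpq | hpq
    · rw [← hpq, zero_mul, zero_mul]
    · have hppos : 0 < p.p π := by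
        rcases mul_pos_iff.mp hpq with ⟨h1, _⟩ | ⟨h1, _⟩
        · exact h1
        · exact absurd h1 (not_lt.mpr (p.nonneg π))
      have hqpos : 0 < q M π o := by
        rcases mul_pos_iff.mp hpq with ⟨_, h1⟩ | ⟨_, h1⟩
        · exact h1
        · exact absurd h1 (not_lt.mpr (hq0 M π o))
      have hAf := hAfpos π o hppos hqpos
      have hPfν := hP π o
      rw [post_eq, ← div_div, Real.log_div (div_pos hAf hPfν).ne' hρne]
  rw [hGpost] at h12
  have hexpand : η⁻¹ * ((∑ π, ∑ o, p.p π * q M π o *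
      (Real.log (post q part ν.p π o istar) - Real.log (ρ.p istar))) - J0)
      = η⁻¹ * (∑ π, ∑ o, p.p π * q M π o *
        (Real.log (post q part ν.p π o istar) - Real.log (ρ.p istar))) - η⁻¹ * J0 := by
    ring
  linarith [h12, hexpand.le, hexpand.ge]

end RegretHelpers

section Stmt0

variable {Pol Obs Mod I : Type*}
variable [Fintype Pol] [Fintype Obs] [Fintype Mod] [Fintype I] [DecidableEq I]

/-- Expected regret over `n` further rounds, given history `h`, of a learner that plays
`π_t ∼ pl h_t` against an (adaptive) adversary `Adv` that chooses `(M_t, π⋆_t) = Adv h_t`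
as a function of the history of past (decision, observation) pairs. -/
def expRegGen (q : Mod → Pol → Obs → ℝ) (V : Mod → Pol → ℝ)
    (Adv : List (Pol × Obs) → Mod × Pol) (pl : List (Pol × Obs) → FDist Pol) :
    ℕ → List (Pol × Obs) → ℝ
  | 0, _ => 0
  | n + 1, h =>
      ∑ π : Pol, (pl h).p π *
        ((V (Adv h).1 (Adv h).2 - V (Adv h).1 π) +
          ∑ o : Obs, q (Adv h).1 π o * expRegGen q V Adv pl n (h ++ [(π, o)]))

/-- **Theorem (regret of the general algorithm in a `Φ`-restricted environment).**
If `ρ_1` is uniform on `Φ`, at each history `(p_t, ν_t)` is a saddle point of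
`min_{p∈Δ(Π)} max_{ν∈Δ(Ψ)} AIR^Φ_{ρ_t,η}(p,ν)`, and `ρ_{t+1} = ν_t(·|π_t,o_t)`,
then against any adversary restricted to a fixed cell `φ⋆` the expected regret over
`T` rounds is at most `log|Φ|/η + T·max_{ρ∈Δ(Φ)} max_{ν∈Δ(Ψ)} min_{p∈Δ(Π)} AIR^Φ`. -/
theorem general_algorithm_regret
    [Nonempty Pol] [Nonempty Obs] [Nonempty Mod] [Nonempty I]
    (q : Mod → Pol → Obs → ℝ)
    (hq : ∀ m π, (∀ o, 0 ≤ q m π o) ∧ ∑ o, q m π o = 1)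
    (V : Mod → Pol → ℝ)
    (hV : ∀ m π, V m π ∈ Set.Icc (0 : ℝ) 1)
    (part : Mod × Pol → Option I)
    (hnonempty : ∀ i : I, ∃ mp, part mp = some i)
    (η : ℝ) (hη : 0 < η)
    -- the adversary: committed to a fixed cell `istar`, otherwise arbitrary and adaptive
    (Adv : List (Pol × Obs) → Mod × Pol) (istar : I)
    (hAdv : ∀ h, part (Adv h) = some istar)
    -- the learner: reference distributions, decision distributions, and world distributions
    (ρl : List (Pol × Obs) → FDist I)
    (pl : List (Pol × Obs) → FDist Pol)
    (νl : List (Pol × Obs) → FDist (Mod × Pol))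
    (hνsupp : ∀ h mp, part mp = none → (νl h).p mp = 0)
    -- initialization: `ρ_1` is uniform on `Φ`
    (hinit : ∀ i, (ρl []).p i = ((Fintype.card I : ℝ))⁻¹)
    -- `(p_t, ν_t)` is a saddle point of `min_p max_ν AIR^Φ_{ρ_t,η}(p,ν)`
    (hsaddle₁ : ∀ h (ν' : FDist (Mod × Pol)), (∀ mp, part mp = none → ν'.p mp = 0) →
      AIR q V part η (ρl h).p (pl h).p ν'.p ≤ AIR q V part η (ρl h).p (pl h).p (νl h).p)
    (hsaddle₂ : ∀ h (p' : FDist Pol),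
      AIR q V part η (ρl h).p (pl h).p (νl h).p ≤ AIR q V part η (ρl h).p p'.p (νl h).p)
    -- posterior update: `ρ_{t+1}(φ) = ν_t(φ | π_t, o_t)`
    (hupdate : ∀ h (π : Pol) (o : Obs) (i : I),
      (ρl (h ++ [(π, o)])).p i = post q part (νl h).p π o i)
    (T : ℕ) :
    ((expRegGen q V Adv pl T [] : ℝ) : EReal)
      ≤ ((Real.log (Fintype.card I) / η : ℝ) : EReal)
          + (T : EReal) * AIRmaxmin q V part η := by
  classical
  have hq0 : ∀ m π o, 0 ≤ q m π o := fun m π o => (hq m π).1 o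
  have hcard : 0 < (Fintype.card I : ℝ) := by
    exact_mod_cast Fintype.card_pos
  have hlogcard : 0 ≤ Real.log (Fintype.card I) :=
    Real.log_nonneg (by exact_mod_cast Fintype.card_pos)
  rcases Nat.eq_zero_or_pos T with hT | hT
  · subst hT
    simp only [expRegGen, Nat.cast_zero, zero_mul, add_zero]
    rw [EReal.coe_le_coe_iff]
    positivity
  · -- all the standing structural facts
    have hPall : ∀ h (π : Pol) (o : Obs), 0 < Pf q (νl h).p π o := by
      intro h π o
      rcases (Pf_nonneg hq0 (νl h).nonneg π o).eq_or_lt with h0 | h0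
      · exfalso
        have hs := (ρl (h ++ [(π,o)])).sum_one
        have hz : ∀ i, (ρl (h ++ [(π,o)])).p i = 0 := by
          intro i
          rw [hupdate h π o i, post_eq, ← h0, div_zero]
        rw [Finset.sum_congr rfl (fun i _ => hz i)] at hs
        simp at hs
      · exact h0
    have hAdvMi : ∀ h, part ((Adv h).1, (Adv h).2) = some istar := fun h => by
      rw [Prod.mk.eta]; exact hAdv h
    have hkey : ∀ h, 0 < (ρl h).p istar →
        (∀ π o, 0 < (pl h).p π → 0 < q (Adv h).1 π o →
          0 < post q part (νl h).p π o istar) ∧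
        ∃ F0 : ℝ, AIR q V part η (ρl h).p (pl h).p (νl h).p = (F0 : EReal) ∧
          ∑ π, (pl h).p π * (V (Adv h).1 (Adv h).2 - V (Adv h).1 π) ≤ F0 + η⁻¹ *
            ∑ π, ∑ o, (pl h).p π * q (Adv h).1 π o *
              (Real.log (post q part (νl h).p π o istar) - Real.log ((ρl h).p istar)) := by
      intro h hρh
      exact key_round q V part η hη hq0 (ρl h) (pl h) (νl h) (Adv h).1 (Adv h).2 istar
        (hAdvMi h) hρh (hνsupp h) (hPall h) (fun ν' hν' => hsaddle₁ h ν' hν')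
    have hle : ∀ h, AIR q V part η (ρl h).p (pl h).p (νl h).p ≤ AIRmaxmin q V part η := by
      intro h
      have h1 : AIR q V part η (ρl h).p (pl h).p (νl h).p
          ≤ ⨅ p' : FDist Pol, AIR q V part η (ρl h).p p'.p (νl h).p :=
        le_iInf (fun p' => hsaddle₂ h p')
      refine le_trans h1 ?_
      rw [AIRmaxmin]
      have h2 : (⨅ p' : FDist Pol, AIR q V part η (ρl h).p p'.p (νl h).p)
          ≤ ⨆ ν' : {ν' : FDist (Mod × Pol) // ∀ mp, part mp = none → ν'.p mp = 0},
              ⨅ p' : FDist Pol, AIR q V part η (ρl h).p p'.p ν'.1.p :=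
        le_iSup (f := fun ν' : {ν' : FDist (Mod × Pol) //
          ∀ mp, part mp = none → ν'.p mp = 0} =>
          ⨅ p' : FDist Pol, AIR q V part η (ρl h).p p'.p ν'.1.p) ⟨νl h, hνsupp h⟩
      refine le_trans h2 ?_
      exact le_iSup (f := fun ρ' : FDist I =>
        ⨆ ν' : {ν' : FDist (Mod × Pol) // ∀ mp, part mp = none → ν'.p mp = 0},
          ⨅ p' : FDist Pol, AIR q V part η ρ'.p p'.p ν'.1.p) (ρl h)
    have hρinit : 0 < (ρl []).p istar := by
      rw [hinit istar]
      exact inv_pos.2 hcard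
    by_cases hD : AIRmaxmin q V part η = ⊤
    · rw [hD, EReal.mul_top_of_pos (by
        rw [← EReal.coe_coe_eq_natCast]
        exact_mod_cast (by exact_mod_cast hT : (0:ℝ) < (T:ℝ))),
        EReal.add_top_of_ne_bot (EReal.coe_ne_bot _)]
      exact le_top
    · have hDbot : AIRmaxmin q V part η ≠ ⊥ := by
        obtain ⟨_, F0, hAIReq, _⟩ := hkey [] hρinit
        intro hb
        rw [hb] at hle
        have := hle []
        rw [hAIReq] at this
        exact EReal.coe_ne_bot F0 (le_bot_iff.mp this)
      set Amax := (AIRmaxmin q V part η).toReal with hAmaxdef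
      have hDeq : AIRmaxmin q V part η = (Amax : EReal) :=
        (EReal.coe_toReal hD hDbot).symm
      have hF0le : ∀ h, AIR q V part η (ρl h).p (pl h).p (νl h).p ≤ (Amax : EReal) := by
        intro h; rw [← hDeq]; exact hle h
      -- main induction
      have hmain : ∀ n h, 0 < (ρl h).p istar →
          expRegGen q V Adv pl n h ≤ (n : ℝ) * Amax
            + η⁻¹ * (- Real.log ((ρl h).p istar)) := by
        intro n
        induction n with
        | zero =>
          intro h hρh
          have hρ1 : (ρl h).p istar ≤ 1 := by
            rw [← (ρl h).sum_one]
            exact Finset.single_le_sum (fun i _ => (ρl h).nonneg i) (Finset.mem_univ istar)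
          have hlog : Real.log ((ρl h).p istar) ≤ 0 := Real.log_nonpos hρh.le hρ1
          have hηinv : (0:ℝ) < η⁻¹ := inv_pos.2 hη
          simp only [expRegGen, Nat.cast_zero, zero_mul, zero_add]
          nlinarith
        | succ n ih =>
          intro h hρh
          obtain ⟨hpos1, F0, hAIReq, hineq⟩ := hkey h hρh
          have hF0 : F0 ≤ Amax := by
            have := hF0le h
            rw [hAIReq, EReal.coe_le_coe_iff] at this
            exact this
          have hηinv : (0:ℝ) < η⁻¹ := inv_pos.2 hη
          have hsplit : expRegGen q V Adv pl (n+1) h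
              = (∑ π, (pl h).p π * (V (Adv h).1 (Adv h).2 - V (Adv h).1 π))
                + ∑ π, ∑ o, (pl h).p π * q (Adv h).1 π o *
                    expRegGen q V Adv pl n (h ++ [(π, o)]) := by
            rw [expRegGen, ← Finset.sum_add_distrib]
            refine Finset.sum_congr rfl fun π _ => ?_
            rw [mul_add, Finset.mul_sum]
            congr 1
            exact Finset.sum_congr rfl fun o _ => (mul_assoc _ _ _).symm
          have hbound : ∀ π o, (pl h).p π * q (Adv h).1 π o *
                expRegGen q V Adv pl n (h ++ [(π, o)])
              ≤ (pl h).p π * q (Adv h).1 π o * ((n : ℝ) * Amax)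
                - η⁻¹ * ((pl h).p π * q (Adv h).1 π o *
                    Real.log (post q part (νl h).p π o istar)) := by
            intro π o
            rcases (mul_nonneg ((pl h).nonneg π) (hq0 (Adv h).1 π o)).eq_or_lt with hpq | hpq
            · rw [← hpq, zero_mul, zero_mul, zero_mul, mul_zero, sub_zero]
            · have hppos : 0 < (pl h).p π := by
                rcases mul_pos_iff.mp hpq with ⟨h1, _⟩ | ⟨h1, _⟩
                · exact h1
                · exact absurd h1 (not_lt.mpr ((pl h).nonneg π))
              have hqpos : 0 < q (Adv h).1 π o := by
                rcases mul_pos_iff.mp hpq with ⟨_, h1⟩ | ⟨_, h1⟩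
                · exact h1
                · exact absurd h1 (not_lt.mpr (hq0 (Adv h).1 π o))
              have hρ' : 0 < (ρl (h ++ [(π,o)])).p istar := by
                rw [hupdate h π o istar]
                exact hpos1 π o hppos hqpos
              have hih := ih (h ++ [(π,o)]) hρ'
              rw [hupdate h π o istar] at hih
              have h2 := mul_le_mul_of_nonneg_left hih hpq.le
              nlinarith [h2]
          have hsum1 : ∀ c : ℝ,
              (∑ π, ∑ o, (pl h).p π * q (Adv h).1 π o * c) = c := by
            intro c
            have hinner : ∀ π, (∑ o, (pl h).p π * q (Adv h).1 π o * c)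
                = (pl h).p π * c := by
              intro π
              rw [show (∑ o, (pl h).p π * q (Adv h).1 π o * c)
                  = (∑ o, q (Adv h).1 π o) * ((pl h).p π * c) from by
                rw [Finset.sum_mul]
                exact Finset.sum_congr rfl fun o _ => by ring]
              rw [(hq (Adv h).1 π).2, one_mul]
            rw [Finset.sum_congr rfl (fun π _ => hinner π), ← Finset.sum_mul,
              (pl h).sum_one, one_mul]
          have hconv : (∑ π, ∑ o, (pl h).p π * q (Adv h).1 π o *
                (Real.log (post q part (νl h).p π o istar) - Real.log ((ρl h).p istar)))
              = (∑ π, ∑ o, (pl h).p π * q (Adv h).1 π o *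
                  Real.log (post q part (νl h).p π o istar))
                - Real.log ((ρl h).p istar) := by
            have e : (∑ π, ∑ o, (pl h).p π * q (Adv h).1 π o *
                (Real.log (post q part (νl h).p π o istar) - Real.log ((ρl h).p istar)))
                = (∑ π, ∑ o, (pl h).p π * q (Adv h).1 π o *
                    Real.log (post q part (νl h).p π o istar))
                  - (∑ π, ∑ o, (pl h).p π * q (Adv h).1 π o *
                      Real.log ((ρl h).p istar)) := by
              rw [← Finset.sum_sub_distrib]
              refine Finset.sum_congr rfl fun π _ => ?_
              rw [← Finset.sum_sub_distrib]
              exact Finset.sum_congr rfl fun o _ => by ring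
            rw [e, hsum1 (Real.log ((ρl h).p istar))]
          rw [hconv] at hineq
          have hbsum : (∑ π, ∑ o, (pl h).p π * q (Adv h).1 π o *
                expRegGen q V Adv pl n (h ++ [(π, o)]))
              ≤ (n : ℝ) * Amax - η⁻¹ * (∑ π, ∑ o, (pl h).p π * q (Adv h).1 π o *
                  Real.log (post q part (νl h).p π o istar)) := by
            calc (∑ π, ∑ o, (pl h).p π * q (Adv h).1 π o *
                  expRegGen q V Adv pl n (h ++ [(π, o)]))
                ≤ ∑ π, ∑ o, ((pl h).p π * q (Adv h).1 π o * ((n : ℝ) * Amax)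
                  - η⁻¹ * ((pl h).p π * q (Adv h).1 π o *
                      Real.log (post q part (νl h).p π o istar))) :=
                Finset.sum_le_sum fun π _ => Finset.sum_le_sum fun o _ => hbound π o
              _ = (∑ π, ∑ o, (pl h).p π * q (Adv h).1 π o * ((n : ℝ) * Amax))
                  - ∑ π, ∑ o, η⁻¹ * ((pl h).p π * q (Adv h).1 π o *
                      Real.log (post q part (νl h).p π o istar)) := by
                rw [← Finset.sum_sub_distrib]
                exact Finset.sum_congr rfl fun π _ => Finset.sum_sub_distrib _ _
              _ = (n : ℝ) * Amax - η⁻¹ * (∑ π, ∑ o, (pl h).p π * q (Adv h).1 π o *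
                  Real.log (post q part (νl h).p π o istar)) := by
                rw [hsum1 ((n : ℝ) * Amax)]
                congr 1
                rw [Finset.mul_sum]
                exact Finset.sum_congr rfl fun π _ => (Finset.mul_sum _ _ _).symm
          rw [hsplit]
          push_cast
          nlinarith [hineq, hbsum, hF0]
      have hfinal := hmain T [] hρinit
      rw [hinit istar, Real.log_inv] at hfinal
      rw [hDeq, show ((T : ℕ) : EReal) = (((T : ℝ) : ℝ) : EReal) from
        (EReal.coe_coe_eq_natCast T).symm, ← EReal.coe_mul, ← EReal.coe_add,
        EReal.coe_le_coe_iff]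
      have : Real.log (Fintype.card I) / η = η⁻¹ * Real.log (Fintype.card I) := by
        rw [div_eq_inv_mul]
      nlinarith [hfinal]

end Stmt0
end
end

section
/- Let Θ be a partition of 𝓜 with pieces 𝓜_θ, and suppose Φ = {φ_θ : θ ∈ Θ} where φ_θ = {(M, π_θ) : M ∈ 𝓜_θ} for a policy π_θ satisfying π_M = π_θ (i.e., π_θ maximizes V_M) for every M ∈ 𝓜_θ (a trimmed, aggregated stochastic game). Let Φ̄ = { {(M, π) : M ∈ 𝓜_θ} : θ ∈ Θ, π ∈ Π } be the untrimmed version. Then for every η > 0, DEC^KL_η(𝓜, Φ) = DEC^KL_η(𝓜, Φ̄), and 𝓜̄(Φ) = 𝓜̄(Φ̄). -/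
open scoped BigOperators

noncomputable section

/-- **Lemma (trimming does not change the complexity).**
Let `Θ` be a partition of `𝓜` (given by `partM : Mod → I0`) with pieces `𝓜_θ`,
and a policy `π_θ` for each piece with `π_M = π_θ` (i.e. `π_θ` maximizes `V_M`)
for every `M ∈ 𝓜_θ`.  Let `Φ = {φ_θ}` with `φ_θ = {(M, π_θ) : M ∈ 𝓜_θ}` be the
trimmed, aggregated game and `Φ̄ = { {(M, π) : M ∈ 𝓜_θ} : θ ∈ Θ, π ∈ Π }` its
untrimmed version.  Then for every `η > 0`,
`DEC^KL_η(𝓜, Φ) = DEC^KL_η(𝓜, Φ̄)` and `𝓜̄(Φ) = 𝓜̄(Φ̄)`. -/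
theorem trimming_lemma
    {Pol Obs Mod I0 : Type*}
    [Fintype Pol] [Fintype Obs] [Fintype Mod] [Fintype I0]
    [DecidableEq I0] [DecidableEq Pol]
    [Nonempty Pol] [Nonempty Obs] [Nonempty Mod]
    (q : Mod → Pol → Obs → ℝ)
    (hq : ∀ m π, (∀ o, 0 ≤ q m π o) ∧ ∑ o, q m π o = 1)
    (V : Mod → Pol → ℝ)
    (hV : ∀ m π, V m π ∈ Set.Icc (0 : ℝ) 1)
    (partM : Mod → I0) (πθ : I0 → Pol)
    (hopt : ∀ m : Mod, V m (πθ (partM m)) = ⨆ π : Pol, V m π)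
    (η : ℝ) (hη : 0 < η) :
    DECPhi q V
        (fun mp => if mp.2 = πθ (partM mp.1) then some (partM mp.1) else none) η
      = DECPhi q V (fun mp => some (partM mp.1, mp.2)) η ∧
    (∀ μ : FDist Mod,
      (∃ i : I0, ∀ m, μ.p m ≠ 0 →
          ∃ π : Pol,
            (if π = πθ (partM m) then some (partM m) else none) = some i) ↔
      (∃ i : I0 × Pol, ∀ m, μ.p m ≠ 0 →
          ∃ π : Pol, (some (partM m, π) : Option (I0 × Pol)) = some i)) := by

  constructor
  · -- DEC equality
    unfold DECPhi
    refine iSup_congr fun μbar => ?_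
    refine iInf_congr fun p => ?_
    apply le_antisymm
    · -- trimmed ≤ untrimmed
      refine iSup_le fun i => iSup_le fun ν => ?_
      have hpf : ∀ mp, ν.1.p mp ≠ 0 →
          (some (partM mp.1, mp.2) : Option (I0 × Pol)) = some (i, πθ i) := by
        intro mp h
        have h2 := ν.2 mp h
        dsimp only at h2
        by_cases hc : mp.2 = πθ (partM mp.1)
        · rw [if_pos hc] at h2
          have hi : partM mp.1 = i := Option.some_injective _ h2
          rw [hc, hi]
        · rw [if_neg hc] at h2; exact absurd h2 (by simp)
      exact le_iSup_of_le (i, πθ i) (le_iSup_of_le ⟨ν.1, hpf⟩ le_rfl)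
    · -- untrimmed ≤ trimmed
      refine iSup_le fun ip => iSup_le fun ν => ?_
      have hsupp : ∀ m π', ν.1.p (m, π') ≠ 0 → partM m = ip.1 ∧ π' = ip.2 := by
        intro m π' h
        have h2 : ((partM m, π') : I0 × Pol) = ip := Option.some_injective _ (by have := ν.2 (m, π') h; dsimp only at this; exact this)
        exact ⟨congrArg Prod.fst h2, congrArg Prod.snd h2⟩
      have hzero : ∀ m π', π' ≠ ip.2 → ν.1.p (m, π') = 0 := by
        intro m π' hne
        by_contra h
        exact hne (hsupp m π' h).2
      -- the trimmed counterpart ν'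
      have hν'nonneg : ∀ mp : Mod × Pol,
          0 ≤ (if mp.2 = πθ ip.1 then ν.1.p (mp.1, ip.2) else 0) := by
        intro mp; split
        · exact ν.1.nonneg _
        · exact le_rfl
      have hrow : ∀ m : Mod, ∑ π' : Pol, ν.1.p (m, π') = ν.1.p (m, ip.2) := by
        intro m
        refine Finset.sum_eq_single ip.2 (fun b _ hb => hzero m b hb) (by simp)
      have hν'sum : ∑ mp : Mod × Pol,
          (if mp.2 = πθ ip.1 then ν.1.p (mp.1, ip.2) else 0) = 1 := by
        rw [Fintype.sum_prod_type]
        have h1 : ∀ m : Mod,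
            (∑ π' : Pol, if π' = πθ ip.1 then ν.1.p (m, ip.2) else 0) = ν.1.p (m, ip.2) := by
          intro m; simp
        simp only [h1]
        have h2 := ν.1.sum_one
        rw [Fintype.sum_prod_type] at h2
        simpa only [hrow] using h2
      set ν' : FDist (Mod × Pol) :=
        ⟨fun mp => if mp.2 = πθ ip.1 then ν.1.p (mp.1, ip.2) else 0, hν'nonneg, hν'sum⟩ with hν'
      have hν'supp : ∀ mp, ν'.p mp ≠ 0 →
          (if mp.2 = πθ (partM mp.1) then some (partM mp.1) else none) = some ip.1 := by
        intro mp h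
        simp only [hν'] at h
        by_cases h2 : mp.2 = πθ ip.1
        · rw [if_pos h2] at h
          have hp := (hsupp mp.1 ip.2 h).1
          rw [if_pos (by rw [hp, ← h2]), hp]
        · rw [if_neg h2] at h; exact absurd rfl h
      -- marginal identity
      have hmarg : ∀ f : Mod → ℝ,
          ∑ mp : Mod × Pol, ν'.p mp * f mp.1 = ∑ mp : Mod × Pol, ν.1.p mp * f mp.1 := by
        intro f
        rw [Fintype.sum_prod_type, Fintype.sum_prod_type]
        refine Finset.sum_congr rfl fun m _ => ?_
        have hL : (∑ π' : Pol, ν'.p (m, π') * f m) = ν.1.p (m, ip.2) * f m := by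
          simp [hν']
        have hR : (∑ π' : Pol, ν.1.p (m, π') * f m) = ν.1.p (m, ip.2) * f m := by
          rw [← Finset.sum_mul, hrow m]
        rw [hL, hR]
      -- observation mixtures coincide
      have hmix : ∀ π' : Pol, pairMixObs q ν'.p π' = pairMixObs q ν.1.p π' := by
        intro π'
        funext o
        exact hmarg (fun m => q m π' o)
      -- value improvement
      have hA : (∑ mp : Mod × Pol, ν.1.p mp * V mp.1 mp.2)
          ≤ ∑ mp : Mod × Pol, ν'.p mp * V mp.1 mp.2 := by
        rw [Fintype.sum_prod_type, Fintype.sum_prod_type]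
        refine Finset.sum_le_sum fun m _ => ?_
        have hL : (∑ π' : Pol, ν.1.p (m, π') * V m π') = ν.1.p (m, ip.2) * V m ip.2 := by
          refine Finset.sum_eq_single ip.2 (fun b _ hb => by rw [hzero m b hb, zero_mul]) (by simp)
        have hR : (∑ π' : Pol, ν'.p (m, π') * V m π') = ν.1.p (m, ip.2) * V m (πθ ip.1) := by
          simp [hν']
        rw [hL, hR]
        rcases eq_or_ne (ν.1.p (m, ip.2)) 0 with h0 | h0
        · rw [h0, zero_mul, zero_mul]
        · refine mul_le_mul_of_nonneg_left ?_ (ν.1.nonneg _)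
          have hp := (hsupp m ip.2 h0).1
          calc V m ip.2 ≤ ⨆ π : Pol, V m π :=
                le_ciSup (Set.Finite.bddAbove (Set.finite_range _)) ip.2
            _ = V m (πθ ip.1) := by rw [← hopt m, hp]
      -- scalar part
      have hscal : (∑ π : Pol, p.p π *
            ((∑ mp : Mod × Pol, ν.1.p mp * V mp.1 mp.2)
              - ∑ mp : Mod × Pol, ν.1.p mp * V mp.1 π))
          ≤ ∑ π : Pol, p.p π *
            ((∑ mp : Mod × Pol, ν'.p mp * V mp.1 mp.2)
              - ∑ mp : Mod × Pol, ν'.p mp * V mp.1 π) := by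
        refine Finset.sum_le_sum fun π _ => ?_
        refine mul_le_mul_of_nonneg_left ?_ (p.nonneg π)
        rw [hmarg (fun m => V m π)]
        exact sub_le_sub_right hA _
      -- KL parts coincide
      have hKL : (∑ π : Pol, ((p.p π : ℝ) : EReal)
            * KL (pairMixObs q ν'.p π) (mixObs q μbar.p π))
          = ∑ π : Pol, ((p.p π : ℝ) : EReal)
            * KL (pairMixObs q ν.1.p π) (mixObs q μbar.p π) := by
        refine Finset.sum_congr rfl fun π _ => ?_
        rw [hmix π]
      refine le_iSup_of_le ip.1 (le_iSup_of_le ⟨ν', hν'supp⟩ ?_)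
      rw [← hKL]
      exact EReal.sub_le_sub (EReal.coe_le_coe_iff.2 hscal) le_rfl
  · -- support-condition equivalence
    intro μ
    constructor
    · rintro ⟨i, h⟩
      refine ⟨(i, πθ i), fun m hm => ?_⟩
      obtain ⟨π, hπ⟩ := h m hm
      by_cases hc : π = πθ (partM m)
      · rw [if_pos hc] at hπ
        have hi : partM m = i := Option.some_injective _ hπ
        exact ⟨πθ i, by rw [hi]⟩
      · rw [if_neg hc] at hπ; exact absurd hπ (by simp)
    · rintro ⟨⟨i, π2⟩, h⟩
      refine ⟨i, fun m hm => ?_⟩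
      obtain ⟨π, hπ⟩ := h m hm
      have h2 : ((partM m, π) : I0 × Pol) = (i, π2) := Option.some_injective _ hπ
      have hi : partM m = i := congrArg Prod.fst h2
      exact ⟨πθ (partM m), by rw [if_pos rfl, hi]⟩
end
end

section
/- Let I be a finite set, ν a probability distribution on I, and X, Y : I → ℝ^d. Then E_{i∼ν}[ |⟨X(i), Y(i)⟩| ] ≤ √d · √( E_{i∼ν} E_{j∼ν} [ ⟨X(j), Y(i)⟩² ] ). -/
open scoped BigOperators

private theorem spectral_pack {d : ℕ} {I : Type*} [Fintype I] (ν : I → ℝ) (X : I → Fin d → ℝ) :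
    ∃ (V : Fin d → Fin d → ℝ) (mu : Fin d → ℝ),
      (∀ k m, ∑ l, V k l * V m l = if k = m then (1:ℝ) else 0) ∧
      (∀ l m, ∑ k, ∑ k', V k l * (∑ i, ν i * (X i k * X i k')) * V k' m
        = if l = m then mu l else 0) := by
  classical
  set A : Matrix (Fin d) (Fin d) ℝ := Matrix.of (fun k m => ∑ i, ν i * (X i k * X i m))
    with hA_def
  have hA : A.IsHermitian := by
    ext k m
    simp only [Matrix.conjTranspose_apply, hA_def, star_trivial, Matrix.of_apply]
    exact Finset.sum_congr rfl fun i _ => by ring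
  refine ⟨fun k l => (hA.eigenvectorUnitary : Matrix (Fin d) (Fin d) ℝ) k l, hA.eigenvalues,
    ?_, ?_⟩
  · intro k m
    have hUU : (hA.eigenvectorUnitary : Matrix (Fin d) (Fin d) ℝ) *
        star (hA.eigenvectorUnitary : Matrix (Fin d) (Fin d) ℝ) = 1 :=
      (Matrix.mem_unitaryGroup_iff).mp hA.eigenvectorUnitary.2
    have := congrFun (congrFun hUU k) m
    simpa [Matrix.mul_apply, Matrix.one_apply, Matrix.star_apply] using this
  · intro l m
    have := congrFun (congrFun (by
      have h := hA.conjStarAlgAut_star_eigenvectorUnitary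
      rwa [Unitary.conjStarAlgAut_apply, Unitary.coe_star, star_star] at h :
      star (hA.eigenvectorUnitary : Matrix (Fin d) (Fin d) ℝ) * A *
        (hA.eigenvectorUnitary : Matrix (Fin d) (Fin d) ℝ) =
        Matrix.diagonal (RCLike.ofReal ∘ hA.eigenvalues)) l) m
    simp only [Matrix.mul_apply, Matrix.star_apply, star_trivial, Matrix.diagonal_apply,
      Function.comp_apply, RCLike.ofReal_real_eq_id, id_eq] at this
    rw [← this, Finset.sum_comm]
    apply Finset.sum_congr rfl; intro k _
    rw [Finset.sum_mul]
    rfl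

/-- **Decoupling inequality.** Let `I` be a finite set, `ν` a probability distribution
on `I`, and `X, Y : I → ℝ^d`.  Then
`E_{i∼ν}[ |⟨X(i), Y(i)⟩| ] ≤ √d · √( E_{i∼ν} E_{j∼ν} [ ⟨X(j), Y(i)⟩² ] )`,
where `⟨·,·⟩` is the standard inner product on `ℝ^d`. -/
theorem decoupling_inequality {d : ℕ} {I : Type*} [Fintype I]
    (ν : I → ℝ) (hν0 : ∀ i, 0 ≤ ν i) (hν1 : ∑ i, ν i = 1)
    (X Y : I → Fin d → ℝ) :
    ∑ i, ν i * |∑ k, X i k * Y i k| ≤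
      Real.sqrt d *
        Real.sqrt (∑ i, ∑ j, ν i * ν j * (∑ k, X j k * Y i k) ^ 2) := by
  classical
  obtain ⟨V, mu, h1, hM⟩ := spectral_pack ν X
  obtain ⟨a, b, ha, hb⟩ : ∃ a b : I → Fin d → ℝ,
      (∀ i l, a i l = ∑ k, V k l * X i k) ∧ (∀ i l, b i l = ∑ k, V k l * Y i k) :=
    ⟨_, _, fun _ _ => rfl, fun _ _ => rfl⟩
  -- covariance of a is diagonal
  have hcov : ∀ l m, ∑ i, ν i * (a i l * a i m) = if l = m then mu l else 0 := by
    intro l m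
    rw [← hM l m]
    simp only [ha, Finset.sum_mul_sum, Finset.mul_sum, Finset.sum_mul]
    rw [Finset.sum_comm]
    conv_rhs => rw [Finset.sum_comm]
    apply Finset.sum_congr rfl; intro k' _
    rw [Finset.sum_comm]
    apply Finset.sum_congr rfl; intro k _
    apply Finset.sum_congr rfl; intro i _
    ring
  -- Parseval
  have hpar : ∀ i j, ∑ k, X j k * Y i k = ∑ l, a j l * b i l := by
    intro i j
    simp only [ha, hb]
    have e : ∀ l, (∑ k, V k l * X j k) * (∑ k, V k l * Y i k)
        = ∑ k, ∑ k', (V k l * V k' l) * (X j k * Y i k') := by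
      intro l
      rw [Finset.sum_mul_sum]
      exact Finset.sum_congr rfl fun k _ => Finset.sum_congr rfl fun k' _ => by ring
    simp only [e]
    rw [Finset.sum_comm]
    apply Finset.sum_congr rfl; intro k _
    rw [Finset.sum_comm]
    have e2 : ∀ k', ∑ l, (V k l * V k' l) * (X j k * Y i k')
        = (if k = k' then (1:ℝ) else 0) * (X j k * Y i k') := by
      intro k'
      rw [← Finset.sum_mul, h1]
    simp only [e2, ite_mul, one_mul, zero_mul, Finset.sum_ite_eq, Finset.mem_univ, if_true]
  obtain ⟨α, β, hα, hβ⟩ : ∃ α β : Fin d → ℝ,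
      (∀ l, α l = ∑ i, ν i * a i l ^ 2) ∧ (∀ l, β l = ∑ i, ν i * b i l ^ 2) :=
    ⟨_, _, fun _ => rfl, fun _ => rfl⟩
  have hα_nonneg : ∀ l, 0 ≤ α l := fun l => by
    rw [hα]; exact Finset.sum_nonneg fun i _ => mul_nonneg (hν0 i) (sq_nonneg _)
  have hβ_nonneg : ∀ l, 0 ≤ β l := fun l => by
    rw [hβ]; exact Finset.sum_nonneg fun i _ => mul_nonneg (hν0 i) (sq_nonneg _)
  have hα_mu : ∀ l, α l = mu l := by
    intro l
    have h := hcov l l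
    rw [if_pos rfl] at h
    rw [hα, ← h]
    exact Finset.sum_congr rfl fun i _ => by ring
  -- the inner expectation in the eigenbasis
  have hinner : ∀ i, ∑ j, ν j * (∑ k, X j k * Y i k) ^ 2 = ∑ l, mu l * b i l ^ 2 := by
    intro i
    have e2 : ∀ j, (∑ l, a j l * b i l) ^ 2
        = ∑ l, ∑ m, (a j l * a j m) * (b i l * b i m) := by
      intro j
      rw [sq, Finset.sum_mul_sum]
      exact Finset.sum_congr rfl fun l _ => Finset.sum_congr rfl fun m _ => by ring
    simp only [hpar, e2, Finset.mul_sum]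
    rw [Finset.sum_comm]
    apply Finset.sum_congr rfl; intro l _
    rw [Finset.sum_comm]
    have e3 : ∀ m, ∑ j, ν j * ((a j l * a j m) * (b i l * b i m))
        = (if l = m then mu l else 0) * (b i l * b i m) := by
      intro m
      rw [← hcov l m, Finset.sum_mul]
      exact Finset.sum_congr rfl fun j _ => by ring
    simp only [e3, ite_mul, zero_mul, Finset.sum_ite_eq, Finset.mem_univ, if_true]
    ring
  -- main chain
  calc ∑ i, ν i * |∑ k, X i k * Y i k|
      = ∑ i, ν i * |∑ l, a i l * b i l| := by
        exact Finset.sum_congr rfl fun i _ => by rw [hpar i i]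
    _ ≤ ∑ i, ν i * ∑ l, |a i l * b i l| :=
        Finset.sum_le_sum fun i _ =>
          mul_le_mul_of_nonneg_left (Finset.abs_sum_le_sum_abs _ _) (hν0 i)
    _ = ∑ l, ∑ i, ν i * |a i l * b i l| := by
        simp only [Finset.mul_sum]
        exact Finset.sum_comm
    _ ≤ ∑ l, Real.sqrt (α l) * Real.sqrt (β l) := by
        apply Finset.sum_le_sum; intro l _
        have key := Real.sum_mul_le_sqrt_mul_sqrt Finset.univ
          (fun i => Real.sqrt (ν i) * |a i l|) (fun i => Real.sqrt (ν i) * |b i l|)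
        have e4 : ∀ i : I, (Real.sqrt (ν i) * |a i l|) * (Real.sqrt (ν i) * |b i l|)
            = ν i * |a i l * b i l| := by
          intro i
          rw [abs_mul, mul_mul_mul_comm, Real.mul_self_sqrt (hν0 i)]
        have e5 : ∀ i : I, (Real.sqrt (ν i) * |a i l|) ^ 2 = ν i * a i l ^ 2 := by
          intro i
          rw [mul_pow, Real.sq_sqrt (hν0 i), sq_abs]
        have e6 : ∀ i : I, (Real.sqrt (ν i) * |b i l|) ^ 2 = ν i * b i l ^ 2 := by
          intro i
          rw [mul_pow, Real.sq_sqrt (hν0 i), sq_abs]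
        simp only [e4, e5, e6] at key
        rw [hα, hβ]
        exact key
    _ = ∑ l, Real.sqrt (α l * β l) :=
        Finset.sum_congr rfl fun l _ => (Real.sqrt_mul (hα_nonneg l) _).symm
    _ ≤ Real.sqrt d * Real.sqrt (∑ l, α l * β l) := by
        have key := Real.sum_mul_le_sqrt_mul_sqrt (Finset.univ : Finset (Fin d))
          (fun _ => (1:ℝ)) (fun l => Real.sqrt (α l * β l))
        have e7 : ∀ l : Fin d, Real.sqrt (α l * β l) ^ 2 = α l * β l := fun l =>
          Real.sq_sqrt (mul_nonneg (hα_nonneg l) (hβ_nonneg l))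
        simp only [one_mul, one_pow, e7, Finset.sum_const, Finset.card_univ,
          Fintype.card_fin, nsmul_eq_mul, mul_one] at key
        exact key
    _ = Real.sqrt d * Real.sqrt (∑ i, ∑ j, ν i * ν j * (∑ k, X j k * Y i k) ^ 2) := by
        congr 1
        congr 1
        calc ∑ l, α l * β l = ∑ l, ∑ i, mu l * (ν i * b i l ^ 2) := by
              apply Finset.sum_congr rfl; intro l _
              rw [hα_mu l, hβ, Finset.mul_sum]
          _ = ∑ i, ν i * ∑ l, mu l * b i l ^ 2 := by
              rw [Finset.sum_comm]
              apply Finset.sum_congr rfl; intro i _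
              rw [Finset.mul_sum]
              exact Finset.sum_congr rfl fun l _ => by ring
          _ = ∑ i, ∑ j, ν i * ν j * (∑ k, X j k * Y i k) ^ 2 := by
              apply Finset.sum_congr rfl; intro i _
              rw [← hinner i, Finset.mul_sum]
              exact Finset.sum_congr rfl fun j _ => by ring
end
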